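/- arXiv:1704.06742 — 3 statements merged into one kernel-verified Lean document; each statement's English description precedes it below -/
import Mathlib

section
/- Let g_1, …, g_r : [0,1] → ℝ be bounded measurable functions and let ξ = (ξ_1, …, ξ_r) be independent Uniform(0,1) random variables; write g(ξ) = (g_1(ξ_1), …, g_r(ξ_r)) ∈ ℝʳ. Then V(g) = Tr[(𝔼[g(ξ)g(ξ)ᵀ])³] − ‖𝔼 g(ξ)‖⁶ ≥ 0, and V(g) = 0 if and only if each component g_l is almost surely constant (i.e., Var(g_l(ξ_l)) = 0 for every l ∈ [r]). -/
/-! By independence of the coordinates, `𝔼[g(ξ)g(ξ)ᵀ] = diag(v) + m mᵀ` with `m_l = 𝔼 g_l(ξ_l)` and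
`v_l = Var g_l(ξ_l)`. Since `(m mᵀ)² = ‖m‖² m mᵀ`, expanding the cube and using cyclicity of the
trace gives `V(g) = ∑ v_l³ + 3 ∑ v_l² m_l² + 3 ‖m‖² ∑ v_l m_l²`, a sum of nonnegative terms that
vanishes exactly when every variance `v_l` does. -/

open MeasureTheory Finset

noncomputable section

/-- The uniform distribution on `[0,1]`. -/
def unif01 : Measure ℝ := volume.restrict (Set.Icc (0 : ℝ) 1)

/-- The law of `ξ = (ξ_1, …, ξ_r)` with independent `Uniform(0,1)` coordinates. -/
def cube (r : ℕ) : Measure (Fin r → ℝ) := Measure.pi fun _ => unif01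

/-- The second-moment matrix `𝔼[g(ξ) g(ξ)ᵀ]`. -/
def secondMoment (r : ℕ) (g : Fin r → ℝ → ℝ) : Matrix (Fin r) (Fin r) ℝ :=
  Matrix.of fun a b => ∫ x, g a (x a) * g b (x b) ∂(cube r)

/-- `V(g) = Tr[(𝔼[g(ξ)g(ξ)ᵀ])³] − ‖𝔼 g(ξ)‖⁶`. -/
def Vg (r : ℕ) (g : Fin r → ℝ → ℝ) : ℝ :=
  Matrix.trace (secondMoment r g * secondMoment r g * secondMoment r g) -
    (∑ a : Fin r, (∫ x, g a (x a) ∂(cube r)) ^ 2) ^ 3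

open Matrix

section Pi

variable {ι α 𝕜 : Type*} [Fintype ι] [MeasurableSpace α] [RCLike 𝕜]
  {μ : ι → Measure α} [∀ i, IsProbabilityMeasure (μ i)]

theorem integral_pi_comp_eval (f : α → 𝕜) (a : ι) :
    ∫ x, f (x a) ∂Measure.pi μ = ∫ y, f y ∂μ a := by
  classical
  have h := integral_fintype_prod_eq_prod (μ := μ) fun i y => if i = a then f y else 1
  simp only [Finset.prod_ite_eq', Finset.mem_univ, if_true] at h
  rw [h, Finset.prod_eq_single a (fun i _ hi => by simp [hi]) (by simp)]
  simp

theorem integral_pi_comp_eval_mul_comp_eval (f g : α → 𝕜) {a b : ι} (hab : a ≠ b) :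
    ∫ x, f (x a) * g (x b) ∂Measure.pi μ = (∫ y, f y ∂μ a) * ∫ y, g y ∂μ b := by
  classical
  have h := integral_fintype_prod_eq_prod (μ := μ)
    fun i y => (if i = a then f y else 1) * (if i = b then g y else 1)
  simp only [Finset.prod_mul_distrib, Finset.prod_ite_eq', Finset.mem_univ, if_true] at h
  rw [h, ← Finset.prod_subset (Finset.subset_univ {a, b}) fun i _ hi => by simp_all,
    Finset.prod_pair hab]
  simp [hab, hab.symm]

end Pi

section TraceCube

variable {n R : Type*} [Fintype n] [DecidableEq n] [CommRing R]

def traceCubeExcess (v m : n → R) : R :=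
  ∑ i, v i ^ 3 + 3 * ∑ i, v i ^ 2 * m i ^ 2 + 3 * (∑ i, m i ^ 2) * ∑ i, v i * m i ^ 2

theorem trace_diagonal_mul_vecMulVec_self (w m : n → R) :
    trace (diagonal w * vecMulVec m m) = ∑ i, w i * m i ^ 2 := by
  simp only [trace, diag_apply, diagonal_mul, vecMulVec_apply]
  exact Finset.sum_congr rfl fun i _ => by ring

omit [DecidableEq n] in
theorem vecMulVec_self_mul_self (m : n → R) :
    vecMulVec m m * vecMulVec m m = (∑ i, m i ^ 2) • vecMulVec m m := by
  rw [vecMulVec_mul_vecMulVec, vecMulVec_smul, dotProduct]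
  simp only [sq]

theorem trace_cube_diagonal_add_vecMulVec_self (v m : n → R) :
    trace ((diagonal v + vecMulVec m m) * (diagonal v + vecMulVec m m) *
        (diagonal v + vecMulVec m m)) = traceCubeExcess v m + (∑ i, m i ^ 2) ^ 3 := by
  set D := diagonal v
  set P := vecMulVec m m
  set t := ∑ i, m i ^ 2
  have hPP : P * P = t • P := vecMulVec_self_mul_self m
  have hDD : D * D = diagonal fun i => v i ^ 2 := by
    simp only [D, diagonal_mul_diagonal, sq]
  have hDDD : trace (D * D * D) = ∑ i, v i ^ 3 := by
    simp only [hDD, D, diagonal_mul_diagonal, trace_diagonal, pow_succ]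
  have hDDP : trace (D * D * P) = ∑ i, v i ^ 2 * m i ^ 2 := by
    rw [hDD, trace_diagonal_mul_vecMulVec_self]
  have hDPP : trace (D * P * P) = t * ∑ i, v i * m i ^ 2 := by
    rw [mul_assoc, hPP, Matrix.mul_smul, trace_smul, trace_diagonal_mul_vecMulVec_self, smul_eq_mul]
  have hPPP : trace (P * P * P) = t ^ 3 := by
    rw [hPP, smul_mul, hPP, smul_smul, trace_smul, trace_vecMulVec, dotProduct, smul_eq_mul]
    simp only [t, sq]
    ring
  have hDPD : trace (D * P * D) = trace (D * D * P) := trace_mul_cycle D P D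
  have hPDD : trace (P * D * D) = trace (D * D * P) := (trace_mul_cycle P D D).trans hDPD
  have hPPD : trace (P * P * D) = trace (D * P * P) := trace_mul_cycle P P D
  have hPDP : trace (P * D * P) = trace (D * P * P) := (trace_mul_cycle P D P).trans hPPD
  have expand : (D + P) * (D + P) * (D + P) =
      D * D * D + D * D * P + D * P * D + D * P * P + P * D * D + P * D * P + P * P * D +
        P * P * P := by
    noncomm_ring
  simp only [expand, trace_add, hDPD, hPDD, hPPD, hPDP, hDDD, hDDP, hDPP, hPPP, traceCubeExcess]
  ring

end TraceCube

section Nonneg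

variable {n R : Type*} [Fintype n] [CommRing R] [LinearOrder R] [IsStrictOrderedRing R]
  {v : n → R}

theorem sum_cube_le_traceCubeExcess (hv : ∀ i, 0 ≤ v i) (m : n → R) :
    ∑ i, v i ^ 3 ≤ traceCubeExcess v m := by
  have h₁ : 0 ≤ ∑ i, v i ^ 2 * m i ^ 2 := Finset.sum_nonneg fun i _ => by positivity
  have h₂ : 0 ≤ ∑ i, m i ^ 2 := Finset.sum_nonneg fun i _ => by positivity
  have h₃ : 0 ≤ ∑ i, v i * m i ^ 2 :=
    Finset.sum_nonneg fun i _ => mul_nonneg (hv i) (sq_nonneg _)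
  rw [traceCubeExcess]
  nlinarith [mul_nonneg h₂ h₃]

theorem traceCubeExcess_nonneg (hv : ∀ i, 0 ≤ v i) (m : n → R) : 0 ≤ traceCubeExcess v m :=
  (Finset.sum_nonneg fun i _ => pow_nonneg (hv i) 3).trans (sum_cube_le_traceCubeExcess hv m)

theorem traceCubeExcess_eq_zero_iff (hv : ∀ i, 0 ≤ v i) (m : n → R) :
    traceCubeExcess v m = 0 ↔ ∀ i, v i = 0 := by
  refine ⟨fun h i => ?_, fun h => by simp [traceCubeExcess, h]⟩
  have hcubes : ∑ i, v i ^ 3 = 0 :=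
    le_antisymm (h ▸ sum_cube_le_traceCubeExcess hv m)
      (Finset.sum_nonneg fun i _ => pow_nonneg (hv i) 3)
  rw [Finset.sum_eq_zero_iff_of_nonneg fun i _ => pow_nonneg (hv i) 3] at hcubes
  exact pow_eq_zero_iff (by norm_num) |>.mp (hcubes i (Finset.mem_univ i))

end Nonneg

instance : IsProbabilityMeasure unif01 := ⟨by simp [unif01, Real.volume_Icc]⟩

def mean01 (f : ℝ → ℝ) : ℝ := ∫ x, f x ∂unif01

def var01 (f : ℝ → ℝ) : ℝ := ∫ x, f x ^ 2 ∂unif01 - mean01 f ^ 2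

theorem memLp_unif01_of_bounded {f : ℝ → ℝ} (hf : Measurable f) {B : ℝ}
    (hB : ∀ x ∈ Set.Icc (0 : ℝ) 1, |f x| ≤ B) (p : ENNReal) : MemLp f p unif01 :=
  .of_bound hf.aestronglyMeasurable B <|
    ae_restrict_of_forall_mem measurableSet_Icc fun x hx => (Real.norm_eq_abs _).trans_le (hB x hx)

theorem var01_nonneg {f : ℝ → ℝ} (hf : MemLp f 2 unif01) : 0 ≤ var01 f := by
  have h := ProbabilityTheory.variance_eq_sub hf
  simp only [Pi.pow_apply] at h
  exact (ProbabilityTheory.variance_nonneg f unif01).trans_eq h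

theorem secondMoment_eq_diagonal_add_vecMulVec (r : ℕ) (g : Fin r → ℝ → ℝ) :
    secondMoment r g = diagonal (fun a => var01 (g a)) +
      vecMulVec (fun a => mean01 (g a)) (fun a => mean01 (g a)) := by
  ext a b
  rw [secondMoment, of_apply, Matrix.add_apply, diagonal_apply, vecMulVec_apply, cube]
  rcases eq_or_ne a b with rfl | hab
  · rw [integral_pi_comp_eval (fun y => g a y * g a y), if_pos rfl, var01, mean01]
    simp only [sq]
    ring
  · rw [integral_pi_comp_eval_mul_comp_eval _ _ hab, if_neg hab, zero_add, mean01, mean01]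

theorem Vg_eq_traceCubeExcess (r : ℕ) (g : Fin r → ℝ → ℝ) :
    Vg r g = traceCubeExcess (fun a => var01 (g a)) (fun a => mean01 (g a)) := by
  rw [Vg, secondMoment_eq_diagonal_add_vecMulVec, trace_cube_diagonal_add_vecMulVec_self]
  simp only [cube, integral_pi_comp_eval (g _), mean01]
  ring

/-- **Proposition 3 (Gao–Lafferty).** For bounded measurable feature functions
`g_1, …, g_r` one has `V(g) ≥ 0`, with equality if and only if each `g_l` is
almost surely constant on `[0,1]` (zero variance). -/
theorem Vg_nonneg_and_eq_zero_iff (r : ℕ) (g : Fin r → ℝ → ℝ)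
    (hmeas : ∀ l, Measurable (g l))
    (hbdd : ∀ l, ∃ B : ℝ, ∀ x ∈ Set.Icc (0 : ℝ) 1, |g l x| ≤ B) :
    0 ≤ Vg r g ∧
      (Vg r g = 0 ↔
        ∀ l, (∫ x, g l x ^ 2 ∂unif01) - (∫ x, g l x ∂unif01) ^ 2 = 0) := by
  have hvar : ∀ l, 0 ≤ var01 (g l) := fun l =>
    let ⟨_, hB⟩ := hbdd l
    var01_nonneg (memLp_unif01_of_bounded (hmeas l) hB 2)
  rw [Vg_eq_traceCubeExcess]
  exact ⟨traceCubeExcess_nonneg hvar _, traceCubeExcess_eq_zero_iff hvar _⟩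

end
end

section
/- Let A_{ij} ~ Bernoulli(p_{ij}) independently for 1 ≤ i < j ≤ n, with ρ = ρ_n = max_{1≤i<j≤n} p_{ij}. Define p̂ = (1/C(n,2)) Σ_{i<j} A_{ij}, p̄ = (1/C(n,2)) Σ_{i<j} p_{ij}, q̂ = (1/C(n,3)) Σ_{i<j<k} A_{ij}A_{ik}A_{jk}, q̄ = (1/C(n,3)) Σ_{i<j<k} p_{ij}p_{ik}p_{jk}. Then |p̂³ − p̄³| = O_P( ρ^{5/2}/n + ρ²/n² + ρ^{3/2}/n³ ) and |q̂ − q̄| = O_P( ρ^{5/2}/n + ρ^{3/2}/n^{3/2} ), uniformly over the choice of edge probabilities: i.e., for every ε > 0 there is a constant M such that for all n and all (p_{ij}), ℙ( |p̂³ − p̄³| > M(ρ^{5/2}/n + ρ²/n² + ρ^{3/2}/n³) ) ≤ ε and ℙ( |q̂ − q̄| > M(ρ^{5/2}/n + ρ^{3/2}/n^{3/2}) ) ≤ ε. -/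
open MeasureTheory ProbabilityTheory Filter Finset
open scoped ENNReal NNReal

noncomputable section

/-- The space of (directed-encoded) adjacency arrays on `n` nodes; only the
entries with `i < j` are used by the statistics. -/
abbrev Adj (n : ℕ) := Fin n × Fin n → Bool

/-- The law of independent `Bernoulli (p i j)` edges: a weighted sum of Dirac
measures over the finite space of adjacency arrays.  When every `p i j ∈ [0,1]`
this is the product Bernoulli probability measure. -/
def graphMeasure (n : ℕ) (p : Fin n → Fin n → ℝ) : Measure (Adj n) :=
  ∑ A : Adj n,
    (∏ e : Fin n × Fin n,
        ENNReal.ofReal (if A e then p e.1 e.2 else 1 - p e.1 e.2)) • Measure.dirac A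

/-- The Erdős–Rényi model with edge probability `p`. -/
def erMeasure (n : ℕ) (p : ℝ) : Measure (Adj n) := graphMeasure n fun _ _ => p

/-- Real-valued edge indicator `A_{ij}` (for `i < j`). -/
def eV {n : ℕ} (A : Adj n) (i j : Fin n) : ℝ := if A (i, j) then 1 else 0

/-- Symmetrized edge indicator. -/
def eVs {n : ℕ} (A : Adj n) (i j : Fin n) : ℝ := if i < j then eV A i j else eV A j i

/-- Empirical edge frequency `p̂`. -/
def pHat {n : ℕ} (A : Adj n) : ℝ :=
  ((n.choose 2 : ℝ))⁻¹ * ∑ i : Fin n, ∑ j : Fin n, if i < j then eV A i j else 0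

/-- Empirical triangle frequency `F̂₃`. -/
def F3hat {n : ℕ} (A : Adj n) : ℝ :=
  ((n.choose 3 : ℝ))⁻¹ * ∑ i : Fin n, ∑ j : Fin n, ∑ k : Fin n,
    if i < j ∧ j < k then eV A i j * eV A j k * eV A i k else 0

/-- Empirical V-shape frequency `F̂₂`. -/
def F2hat {n : ℕ} (A : Adj n) : ℝ :=
  ((n.choose 3 : ℝ))⁻¹ * ∑ i : Fin n, ∑ j : Fin n, ∑ k : Fin n,
    if i < j ∧ j < k then
      (1 - eV A i j) * eV A j k * eV A i k + eV A i j * (1 - eV A j k) * eV A i k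
        + eV A i j * eV A j k * (1 - eV A i k)
    else 0

/-- Empirical single-edge frequency `F̂₁`. -/
def F1hat {n : ℕ} (A : Adj n) : ℝ :=
  ((n.choose 3 : ℝ))⁻¹ * ∑ i : Fin n, ∑ j : Fin n, ∑ k : Fin n,
    if i < j ∧ j < k then
      (1 - eV A i j) * (1 - eV A j k) * eV A i k
        + eV A i j * (1 - eV A j k) * (1 - eV A i k)
        + (1 - eV A i j) * eV A j k * (1 - eV A i k)
    else 0

def T1stat {n : ℕ} (A : Adj n) : ℝ := 3 * pHat A * (1 - pHat A) ^ 2 - F1hat A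

def T2stat {n : ℕ} (A : Adj n) : ℝ := 3 * pHat A ^ 2 * (1 - pHat A) - F2hat A

def T3stat {n : ℕ} (A : Adj n) : ℝ := pHat A ^ 3 - F3hat A

/-- The chi-squared statistic `T²`. -/
def TsqStat {n : ℕ} (A : Adj n) : ℝ :=
  (n.choose 3 : ℝ) *
    (T2stat A ^ 2 / (3 * pHat A ^ 2 * (1 - pHat A) ^ 2 * (1 - 3 * pHat A) ^ 2
        + 9 * pHat A ^ 3 * (1 - pHat A) ^ 3)
      + T3stat A ^ 2 / (pHat A ^ 3 * (1 - pHat A) ^ 3 + 3 * pHat A ^ 4 * (1 - pHat A) ^ 2))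

/-- The asymptotic covariance matrix `Σ_p`. -/
def SigmaP (p : ℝ) : Matrix (Fin 2) (Fin 2) ℝ :=
  !![3 * p ^ 2 * (1 - p) ^ 2 * (1 - 3 * p) ^ 2 + 9 * p ^ 3 * (1 - p) ^ 3,
      -6 * p ^ 4 * (1 - p) ^ 2;
      -6 * p ^ 4 * (1 - p) ^ 2, p ^ 3 * (1 - p) ^ 3 + 3 * p ^ 4 * (1 - p) ^ 2]

/-- The standard bivariate normal distribution `N(0, I₂)`. -/
def stdGaussian2 : Measure (Fin 2 → ℝ) := Measure.pi fun _ => gaussianReal 0 1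
/-- Mean edge frequency `p̄`. -/
def pBar {n : ℕ} (p : Fin n → Fin n → ℝ) : ℝ :=
  ((n.choose 2 : ℝ))⁻¹ * ∑ i : Fin n, ∑ j : Fin n, if i < j then p i j else 0

/-- Mean triangle frequency `q̄`. -/
def qBar {n : ℕ} (p : Fin n → Fin n → ℝ) : ℝ :=
  ((n.choose 3 : ℝ))⁻¹ * ∑ i : Fin n, ∑ j : Fin n, ∑ k : Fin n,
    if i < j ∧ j < k then p i j * p j k * p i k else 0

/-!
Both statistics are normalised sums of centred products `X_s - q_s`, where
`X_s = ∏_{e ∈ s} A_e` and `q_s = ∏_{e ∈ s} p_e`, over edge sets `s` (single edges for `p̂`,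
triangles for `q̂`). By independence `Cov(X_s, X_t) = q_{s ∪ t} - q_s q_t`, which vanishes when
`s` and `t` are edge-disjoint and is at most `ρ ^ |s ∪ t|` otherwise. An edge overlaps only
itself, while a triangle overlaps itself and fewer than `9n` other triangles, each sharing
exactly one edge with it (so `|s ∪ t| = 5`). Hence `Var p̂ ≤ ρ / C(n,2)` and
`Var q̂ ≤ (ρ³ + 9nρ⁵) / C(n,3)`, and Chebyshev's inequality gives both bounds, the one for `p̂³`
through `p̂³ - p̄³ = 3p̄²d + 3p̄d² + d³` with `d = p̂ - p̄` and `0 ≤ p̄ ≤ ρ`.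
-/

lemma measureReal_lt_abs_le_of_integral_sq_le {Ω : Type*} [MeasurableSpace Ω] {μ : Measure Ω}
    [IsFiniteMeasure μ] {f : Ω → ℝ} (hf : Integrable (fun ω => f ω ^ 2) μ) {τ ε : ℝ}
    (hτ : 0 ≤ τ) (hε : 0 ≤ ε) (h : ∫ ω, f ω ^ 2 ∂μ ≤ ε * τ ^ 2) :
    μ.real {ω | τ < |f ω|} ≤ ε := by
  rcases hτ.eq_or_lt with rfl | hτ
  · have hf0 : (fun ω => f ω ^ 2) =ᵐ[μ] 0 :=
      (integral_eq_zero_iff_of_nonneg (fun ω => sq_nonneg (f ω)) hf).1 <|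
        le_antisymm (by simpa using h) (integral_nonneg fun ω => sq_nonneg (f ω))
    have hnull : μ {ω | 0 < |f ω|} = 0 :=
      measure_eq_zero_iff_ae_notMem.2 (hf0.mono fun ω hω => by simpa using hω)
    rwa [measureReal_def, hnull, ENNReal.toReal_zero]
  · have hsub : {ω | τ < |f ω|} ⊆ {ω | τ ^ 2 ≤ f ω ^ 2} := fun ω (hω : τ < |f ω|) =>
      show τ ^ 2 ≤ f ω ^ 2 from sq_abs (f ω) ▸ pow_le_pow_left₀ hτ.le hω.le 2
    have hmarkov := mul_meas_ge_le_integral_of_nonneg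
      (Filter.Eventually.of_forall fun ω => sq_nonneg (f ω)) hf (τ ^ 2)
    have hmono := measureReal_mono hsub (μ := μ)
    rw [← mul_le_mul_iff_right₀ (pow_pos hτ 2)]
    nlinarith

lemma pow_le_mul_choose {n k : ℕ} (hk : 1 ≤ k) (hkn : k ≤ n) :
    (n : ℝ) ^ k ≤ k ^ k * k.factorial * n.choose k := by
  have hlin : (n : ℝ) ≤ k * (n + 1 - k : ℕ) := by
    have : n ≤ k * (n + 1 - k) := by
      obtain ⟨a, rfl⟩ := Nat.exists_eq_add_of_le hk
      obtain ⟨b, rfl⟩ := Nat.exists_eq_add_of_le hkn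
      rw [show 1 + a + b + 1 - (1 + a) = b + 1 by omega]
      nlinarith
    exact_mod_cast this
  calc (n : ℝ) ^ k ≤ (k * (n + 1 - k : ℕ)) ^ k := by gcongr
    _ = k ^ k * k.factorial * ((n + 1 - k : ℕ) ^ k / k.factorial) := by
        rw [mul_pow]; field_simp
    _ ≤ k ^ k * k.factorial * n.choose k := by gcongr; exact Nat.pow_le_choose k n

lemma inv_choose_le (n : ℕ) {k : ℕ} (hk : 1 ≤ k) :
    (n.choose k : ℝ)⁻¹ ≤ k ^ k * k.factorial / n ^ k := by
  rcases lt_or_ge n k with hnk | hkn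
  · rw [Nat.choose_eq_zero_of_lt hnk, Nat.cast_zero, inv_zero]
    positivity
  · have hn : (0 : ℝ) < n ^ k := by
      have : 0 < n := by omega
      positivity
    rw [inv_le_comm₀ (by exact_mod_cast Nat.choose_pos hkn) (by positivity), inv_div,
      div_le_iff₀ (by positivity), mul_comm]
    exact pow_le_mul_choose hk hkn

lemma inv_sq_mul_mul_eq (x y : ℝ) : x⁻¹ ^ 2 * (x * y) = x⁻¹ * y := by
  rcases eq_or_ne x 0 with rfl | hx
  · simp
  · field_simp

lemma abs_pow_three_sub_pow_three_le {x y ρ τ : ℝ} (hy : 0 ≤ y) (hyρ : y ≤ ρ)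
    (h : |x - y| ≤ τ) : |x ^ 3 - y ^ 3| ≤ 3 * ρ ^ 2 * τ + 3 * ρ * τ ^ 2 + τ ^ 3 := by
  have hρ := hy.trans hyρ
  calc |x ^ 3 - y ^ 3| = |3 * y ^ 2 * (x - y) + 3 * y * (x - y) ^ 2 + (x - y) ^ 3| := by ring_nf
    _ ≤ |3 * y ^ 2 * (x - y)| + |3 * y * (x - y) ^ 2| + |(x - y) ^ 3| := abs_add_three _ _ _
    _ = 3 * y ^ 2 * |x - y| + 3 * y * |x - y| ^ 2 + |x - y| ^ 3 := by
        simp only [abs_mul, abs_pow, abs_of_nonneg hy, abs_of_pos (by norm_num : (0 : ℝ) < 3)]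
    _ ≤ 3 * ρ ^ 2 * τ + 3 * ρ * τ ^ 2 + τ ^ 3 := by gcongr

lemma exists_one_le_and_le_mul_sq {ε c : ℝ} (hε : 0 < ε) (hc : 0 ≤ c) :
    ∃ t : ℝ, 1 ≤ t ∧ c ≤ ε * t ^ 2 := by
  refine ⟨1 + c / ε, le_add_of_nonneg_right (by positivity), ?_⟩
  have hεt : c ≤ ε * (1 + c / ε) := by
    rw [mul_add, mul_div_cancel₀ _ hε.ne']
    linarith
  nlinarith [show 0 ≤ c / ε by positivity]

lemma cube_expansion_le_rate {ρ t : ℝ} (n : ℕ) (hρ : 0 ≤ ρ) (ht : 1 ≤ t) :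
    3 * ρ ^ 2 * (t * √ρ / n) + 3 * ρ * (t * √ρ / n) ^ 2 + (t * √ρ / n) ^ 3
      ≤ 3 * t ^ 3 * (ρ ^ 2 * √ρ / n + ρ ^ 2 / (n : ℝ) ^ 2
        + ρ * √ρ / (n : ℝ) ^ 3) := by
  have hsq : √ρ ^ 2 = ρ := Real.sq_sqrt hρ
  have h₂ : (t * √ρ / n) ^ 2 = t ^ 2 * ρ / (n : ℝ) ^ 2 := by rw [div_pow, mul_pow, hsq]
  have h₃ : (t * √ρ / n) ^ 3 = t ^ 3 * (ρ * √ρ) / (n : ℝ) ^ 3 := by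
    rw [div_pow, mul_pow, pow_succ √ρ, hsq]
  have ht₁ : t ≤ t ^ 3 := le_self_pow₀ ht (by norm_num)
  have ht₂ : t ^ 2 ≤ t ^ 3 := pow_le_pow_right₀ ht (by norm_num)
  have hX : 0 ≤ ρ ^ 2 * √ρ / n := by positivity
  have hY : 0 ≤ ρ ^ 2 / (n : ℝ) ^ 2 := by positivity
  have hZ : 0 ≤ ρ * √ρ / (n : ℝ) ^ 3 := by positivity
  have ht₃ : 0 ≤ t ^ 3 := by positivity
  calc 3 * ρ ^ 2 * (t * √ρ / n) + 3 * ρ * (t * √ρ / n) ^ 2 + (t * √ρ / n) ^ 3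
      = 3 * t * (ρ ^ 2 * √ρ / n) + 3 * t ^ 2 * (ρ ^ 2 / (n : ℝ) ^ 2)
          + t ^ 3 * (ρ * √ρ / (n : ℝ) ^ 3) := by
        rw [h₂, h₃]; ring
    _ ≤ 3 * t ^ 3 * (ρ ^ 2 * √ρ / n + ρ ^ 2 / (n : ℝ) ^ 2
          + ρ * √ρ / (n : ℝ) ^ 3) := by
        nlinarith [mul_le_mul_of_nonneg_right ht₁ hX, mul_le_mul_of_nonneg_right ht₂ hY,
          mul_nonneg ht₃ hZ]

lemma sq_add_sq_le_sq_rate {ρ : ℝ} (n : ℕ) (hρ : 0 ≤ ρ) :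
    ρ ^ 5 / (n : ℝ) ^ 2 + ρ ^ 3 / (n : ℝ) ^ 3
      ≤ (ρ ^ 2 * √ρ / n + ρ * √ρ / ((n : ℝ) * √n)) ^ 2 := by
  have hρ' : √ρ ^ 2 = ρ := Real.sq_sqrt hρ
  have hn' : √(n : ℝ) ^ 2 = n := Real.sq_sqrt (Nat.cast_nonneg n)
  have hcross : 0 ≤ (ρ ^ 2 * √ρ / n) * (ρ * √ρ / ((n : ℝ) * √n)) := by positivity
  have ha : (ρ ^ 2 * √ρ / n) ^ 2 = ρ ^ 5 / (n : ℝ) ^ 2 := by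
    rw [div_pow, mul_pow, hρ']; ring
  have hb : (ρ * √ρ / ((n : ℝ) * √n)) ^ 2 = ρ ^ 3 / (n : ℝ) ^ 3 := by
    rw [div_pow, mul_pow, mul_pow, hρ', hn']; ring
  nlinarith

lemma inv_choose_two_mul_le (n : ℕ) {ρ : ℝ} (hρ : 0 ≤ ρ) :
    (n.choose 2 : ℝ)⁻¹ * ρ ≤ 8 * ρ / (n : ℝ) ^ 2 := by
  have h := inv_choose_le n (k := 2) (by norm_num)
  norm_num [Nat.factorial] at h
  calc (n.choose 2 : ℝ)⁻¹ * ρ ≤ 8 / (n : ℝ) ^ 2 * ρ := by gcongr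
    _ = 8 * ρ / (n : ℝ) ^ 2 := by ring

lemma inv_choose_three_mul_le (n : ℕ) {ρ : ℝ} (hρ : 0 ≤ ρ) :
    (n.choose 3 : ℝ)⁻¹ * (ρ ^ 3 + 9 * n * ρ ^ 5)
      ≤ 1458 * (ρ ^ 5 / (n : ℝ) ^ 2 + ρ ^ 3 / (n : ℝ) ^ 3) := by
  have h := inv_choose_le n (k := 3) (by norm_num)
  norm_num [Nat.factorial] at h
  rcases Nat.eq_zero_or_pos n with rfl | hn
  · simp
  calc (n.choose 3 : ℝ)⁻¹ * (ρ ^ 3 + 9 * n * ρ ^ 5)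
      ≤ 162 / (n : ℝ) ^ 3 * (ρ ^ 3 + 9 * n * ρ ^ 5) := by gcongr
    _ = 162 * (ρ ^ 3 / (n : ℝ) ^ 3) + 1458 * (ρ ^ 5 / (n : ℝ) ^ 2) := by
        field_simp
        ring
    _ ≤ 1458 * (ρ ^ 5 / (n : ℝ) ^ 2 + ρ ^ 3 / (n : ℝ) ^ 3) := by
        nlinarith [show 0 ≤ ρ ^ 3 / (n : ℝ) ^ 3 by positivity]

namespace RandomGraph

variable {n : ℕ} {p : Fin n → Fin n → ℝ}

def graphWeight (p : Fin n → Fin n → ℝ) (A : Adj n) : ℝ :=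
  ∏ e : Fin n × Fin n, if A e then p e.1 e.2 else 1 - p e.1 e.2

instance isFiniteMeasure_graphMeasure : IsFiniteMeasure (graphMeasure n p) where
  measure_univ_lt_top := by
    simp [graphMeasure, Measure.finsetSum_apply, ENNReal.sum_lt_top, ENNReal.prod_lt_top]

lemma edge_weight_nonneg (hp : ∀ i j, 0 ≤ p i j ∧ p i j ≤ 1) (b : Bool)
    (e : Fin n × Fin n) :
    0 ≤ if b then p e.1 e.2 else 1 - p e.1 e.2 := by
  split_ifs
  · exact (hp e.1 e.2).1
  · linarith [(hp e.1 e.2).2]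

lemma graphWeight_nonneg (hp : ∀ i j, 0 ≤ p i j ∧ p i j ≤ 1) (A : Adj n) :
    0 ≤ graphWeight p A :=
  Finset.prod_nonneg fun e _ => edge_weight_nonneg hp (A e) e

lemma graphMeasure_real_singleton (hp : ∀ i j, 0 ≤ p i j ∧ p i j ≤ 1) (A : Adj n) :
    (graphMeasure n p).real {A} = graphWeight p A := by
  rw [measureReal_def, graphMeasure, Measure.finsetSum_apply]
  simp only [Measure.smul_apply, Measure.dirac_apply, smul_eq_mul, Set.indicator_apply,
    Set.mem_singleton_iff, Pi.one_apply, mul_ite, mul_one, mul_zero, Finset.sum_ite_eq',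
    Finset.mem_univ, if_true]
  rw [← ENNReal.ofReal_prod_of_nonneg fun e _ => edge_weight_nonneg hp (A e) e]
  exact ENNReal.toReal_ofReal (graphWeight_nonneg hp A)

lemma integral_graphMeasure (hp : ∀ i j, 0 ≤ p i j ∧ p i j ≤ 1) (f : Adj n → ℝ) :
    ∫ A, f A ∂graphMeasure n p = ∑ A, graphWeight p A * f A := by
  simp [integral_fintype (f := f) Integrable.of_finite, graphMeasure_real_singleton hp]

lemma integral_prod_edges (hp : ∀ i j, 0 ≤ p i j ∧ p i j ≤ 1) (s : Finset (Fin n × Fin n))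
    (g : Fin n × Fin n → Bool → ℝ) :
    ∫ A, ∏ e ∈ s, g e (A e) ∂graphMeasure n p
      = ∏ e ∈ s, (p e.1 e.2 * g e true + (1 - p e.1 e.2) * g e false) := by
  have hsplit : ∀ A : Adj n, graphWeight p A * ∏ e ∈ s, g e (A e)
      = ∏ e, (if A e then p e.1 e.2 else 1 - p e.1 e.2) * (if e ∈ s then g e (A e) else 1) := by
    intro A
    rw [Finset.prod_mul_distrib, Fintype.prod_ite_mem, graphWeight]
  rw [integral_graphMeasure hp, Finset.sum_congr rfl fun A _ => hsplit A,
    ← Fintype.prod_sum fun e (b : Bool) =>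
      (if b then p e.1 e.2 else 1 - p e.1 e.2) * (if e ∈ s then g e b else 1),
    ← Fintype.prod_ite_mem s]
  refine Fintype.prod_congr _ _ fun e => ?_
  split_ifs <;> simp

lemma isProbabilityMeasure_graphMeasure (hp : ∀ i j, 0 ≤ p i j ∧ p i j ≤ 1) :
    IsProbabilityMeasure (graphMeasure n p) := by
  have h := integral_prod_edges hp ∅ fun _ _ => 0
  simp only [Finset.prod_empty, integral_const, smul_eq_mul, mul_one, measureReal_def,
    ENNReal.toReal_eq_one_iff] at h
  exact ⟨h⟩

def subgraphIndicator (A : Adj n) (s : Finset (Fin n × Fin n)) : ℝ := ∏ e ∈ s, eV A e.1 e.2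

def subgraphProb (p : Fin n → Fin n → ℝ) (s : Finset (Fin n × Fin n)) : ℝ :=
  ∏ e ∈ s, p e.1 e.2

lemma subgraphIndicator_mul (A : Adj n) (s t : Finset (Fin n × Fin n)) :
    subgraphIndicator A s * subgraphIndicator A t = subgraphIndicator A (s ∪ t) := by
  simp only [subgraphIndicator, eV, Finset.prod_boole, Finset.forall_mem_union,
    ite_zero_mul_ite_zero, mul_one]

lemma integral_subgraphIndicator (hp : ∀ i j, 0 ≤ p i j ∧ p i j ≤ 1)
    (s : Finset (Fin n × Fin n)) :
    ∫ A, subgraphIndicator A s ∂graphMeasure n p = subgraphProb p s := by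
  simpa [subgraphIndicator, subgraphProb, eV] using
    integral_prod_edges hp s fun _ b => if b then 1 else 0

lemma integral_centered_subgraphIndicator_mul (hp : ∀ i j, 0 ≤ p i j ∧ p i j ≤ 1)
    (s t : Finset (Fin n × Fin n)) :
    ∫ A, (subgraphIndicator A s - subgraphProb p s) * (subgraphIndicator A t - subgraphProb p t)
        ∂graphMeasure n p
      = subgraphProb p (s ∪ t) - subgraphProb p s * subgraphProb p t := by
  have := isProbabilityMeasure_graphMeasure hp
  have hexpand : ∀ A, (subgraphIndicator A s - subgraphProb p s)
      * (subgraphIndicator A t - subgraphProb p t)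
      = subgraphIndicator A (s ∪ t) - subgraphProb p t * subgraphIndicator A s
        - subgraphProb p s * subgraphIndicator A t + subgraphProb p s * subgraphProb p t := by
    intro A
    rw [← subgraphIndicator_mul]
    ring
  simp only [hexpand, integral_add, integral_sub, integral_const_mul, integral_const,
    Integrable.of_finite, integral_subgraphIndicator hp, probReal_univ, one_smul]
  ring

lemma subgraphProb_le_pow {ρ : ℝ} (hp0 : ∀ i j, 0 ≤ p i j) (hpρ : ∀ i j, p i j ≤ ρ)
    (s : Finset (Fin n × Fin n)) : subgraphProb p s ≤ ρ ^ s.card := by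
  calc subgraphProb p s ≤ ∏ _e ∈ s, ρ :=
        Finset.prod_le_prod (fun e _ => hp0 e.1 e.2) fun e _ => hpρ e.1 e.2
    _ = ρ ^ s.card := Finset.prod_const ρ

lemma subgraphProb_union_sub_mul_le {ρ : ℝ} (hp0 : ∀ i j, 0 ≤ p i j)
    (hpρ : ∀ i j, p i j ≤ ρ) (s t : Finset (Fin n × Fin n)) :
    subgraphProb p (s ∪ t) - subgraphProb p s * subgraphProb p t
      ≤ if ¬Disjoint s t then ρ ^ (s ∪ t).card else 0 := by
  have hnonneg : ∀ u, 0 ≤ subgraphProb p u := fun u => Finset.prod_nonneg fun e _ => hp0 e.1 e.2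
  split_ifs with hdisj
  · rw [subgraphProb, Finset.prod_union hdisj]
    exact (sub_self _).le
  · nlinarith [hnonneg s, hnonneg t, subgraphProb_le_pow hp0 hpρ (s ∪ t)]

lemma integral_sq_sum_centered_le {ι : Type*} {ρ : ℝ}
    (hp : ∀ i j, 0 ≤ p i j ∧ p i j ≤ 1) (hpρ : ∀ i j, p i j ≤ ρ) (T : Finset ι)
    (E : ι → Finset (Fin n × Fin n)) :
    ∫ A, (∑ i ∈ T, (subgraphIndicator A (E i) - subgraphProb p (E i))) ^ 2 ∂graphMeasure n p
      ≤ ∑ i ∈ T, ∑ j ∈ T with ¬Disjoint (E i) (E j), ρ ^ (E i ∪ E j).card := by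
  simp only [sq, Finset.sum_mul_sum]
  rw [integral_finsetSum _ fun _ _ => Integrable.of_finite]
  refine Finset.sum_le_sum fun i _ => ?_
  rw [integral_finsetSum _ fun _ _ => Integrable.of_finite, Finset.sum_filter]
  refine Finset.sum_le_sum fun j _ => ?_
  rw [integral_centered_subgraphIndicator_mul hp]
  exact subgraphProb_union_sub_mul_le (fun i j => (hp i j).1) hpρ (E i) (E j)

def orderedPairs (n : ℕ) : Finset (Fin n × Fin n) := {e | e.1 < e.2}

def orderedTriples (n : ℕ) : Finset (Fin n × Fin n × Fin n) :=
  {t | t.1 < t.2.1 ∧ t.2.1 < t.2.2}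

def triangleEdges (t : Fin n × Fin n × Fin n) : Finset (Fin n × Fin n) :=
  {(t.1, t.2.1), (t.2.1, t.2.2), (t.1, t.2.2)}

lemma sum_ite_lt_eq_sum_orderedPairs (f : Fin n → Fin n → ℝ) :
    (∑ i, ∑ j, if i < j then f i j else 0) = ∑ e ∈ orderedPairs n, f e.1 e.2 := by
  rw [orderedPairs, Finset.sum_filter, Fintype.sum_prod_type]

lemma sum_ite_lt_lt_eq_sum_orderedTriples (f : Fin n → Fin n → Fin n → ℝ) :
    (∑ i, ∑ j, ∑ k, if i < j ∧ j < k then f i j k else 0)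
      = ∑ t ∈ orderedTriples n, f t.1 t.2.1 t.2.2 := by
  simp only [orderedTriples, Finset.sum_filter, Fintype.sum_prod_type]

lemma card_orderedPairs : (orderedPairs n).card = n.choose 2 := by
  simpa [orderedPairs] using Fintype.card_product_filter_lt (α := Fin n)

lemma mem_orderedTriples {t : Fin n × Fin n × Fin n} :
    t ∈ orderedTriples n ↔ t.1 < t.2.1 ∧ t.2.1 < t.2.2 := by
  simp [orderedTriples]

lemma card_orderedTriples_le : (orderedTriples n).card ≤ n.choose 3 := by
  calc (orderedTriples n).card ≤ (Finset.univ.powersetCard 3 : Finset (Finset (Fin n))).card := by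
        refine Finset.card_le_card_of_injOn (fun t => {t.1, t.2.1, t.2.2}) (fun t ht => ?_) ?_
        · rw [Finset.mem_coe, mem_orderedTriples] at ht
          rw [Finset.mem_coe, Finset.mem_powersetCard, Finset.card_eq_three]
          refine ⟨Finset.subset_univ _, ?_⟩
          exact ⟨_, _, _, ht.1.ne, (ht.1.trans ht.2).ne, ht.2.ne, rfl⟩
        · rintro ⟨i, j, k⟩ ht ⟨i', j', k'⟩ ht' heq
          rw [Finset.mem_coe, mem_orderedTriples] at ht ht'
          dsimp only at heq
          have hi : i ∈ ({i', j', k'} : Finset (Fin n)) := heq ▸ by simp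
          have hj : j ∈ ({i', j', k'} : Finset (Fin n)) := heq ▸ by simp
          have hk : k ∈ ({i', j', k'} : Finset (Fin n)) := heq ▸ by simp
          have hi' : i' ∈ ({i, j, k} : Finset (Fin n)) := heq.symm ▸ by simp
          have hk' : k' ∈ ({i, j, k} : Finset (Fin n)) := heq.symm ▸ by simp
          simp only [Finset.mem_insert, Finset.mem_singleton, Fin.ext_iff, Fin.lt_def]
            at hi hj hk hi' hk' ht ht'
          simp only [Prod.mk.injEq, Fin.ext_iff]
          omega
    _ = n.choose 3 := by simp

lemma prod_triangleEdges {M : Type*} [CommMonoid M] {t : Fin n × Fin n × Fin n}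
    (ht : t ∈ orderedTriples n) (f : Fin n × Fin n → M) :
    ∏ e ∈ triangleEdges t, f e = f (t.1, t.2.1) * f (t.2.1, t.2.2) * f (t.1, t.2.2) := by
  obtain ⟨i, j, k⟩ := t
  obtain ⟨h₁, h₂⟩ := mem_orderedTriples.1 ht
  rw [triangleEdges, Finset.prod_insert, Finset.prod_pair, mul_assoc] <;>
    simp [h₁.ne, h₁.ne', h₂.ne]

lemma card_triangleEdges {t : Fin n × Fin n × Fin n} (ht : t ∈ orderedTriples n) :
    (triangleEdges t).card = 3 := by
  obtain ⟨i, j, k⟩ := t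
  obtain ⟨h₁, h₂⟩ := mem_orderedTriples.1 ht
  exact Finset.card_eq_three.2
    ⟨_, _, _, by simp [h₁.ne], by simp [h₂.ne], by simp [h₁.ne'], rfl⟩

lemma eq_of_one_lt_card_inter_triangleEdges {t t' : Fin n × Fin n × Fin n}
    (ht : t ∈ orderedTriples n) (ht' : t' ∈ orderedTriples n)
    (h : 1 < (triangleEdges t ∩ triangleEdges t').card) : t = t' := by
  obtain ⟨a, ha, b, hb, hab⟩ := Finset.one_lt_card.1 h
  obtain ⟨i, j, k⟩ := t
  obtain ⟨i', j', k'⟩ := t'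
  obtain ⟨a₁, a₂⟩ := a
  obtain ⟨b₁, b₂⟩ := b
  simp only [mem_orderedTriples] at ht ht'
  simp only [triangleEdges, Finset.mem_inter, Finset.mem_insert, Finset.mem_singleton,
    Prod.mk.injEq] at ha hb
  simp only [ne_eq, Prod.mk.injEq] at hab ⊢
  simp only [Fin.ext_iff, Fin.lt_def] at *
  omega

lemma card_triangleEdges_union {t t' : Fin n × Fin n × Fin n} (ht : t ∈ orderedTriples n)
    (ht' : t' ∈ orderedTriples n) (hne : t ≠ t')
    (h : ¬Disjoint (triangleEdges t) (triangleEdges t')) :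
    (triangleEdges t ∪ triangleEdges t').card = 5 := by
  have hinter : (triangleEdges t ∩ triangleEdges t').card = 1 :=
    le_antisymm (not_lt.1 fun h => hne (eq_of_one_lt_card_inter_triangleEdges ht ht' h))
      (Finset.card_pos.2 (Finset.not_disjoint_iff_nonempty_inter.1 h))
  have := Finset.card_union_add_card_inter (triangleEdges t) (triangleEdges t')
  rw [card_triangleEdges ht, card_triangleEdges ht', hinter] at this
  omega

-- A triangle sharing the edge `e` with `t` is determined by `e`, the position of `e` in it and
-- its third vertex.
lemma card_triangles_sharing_edge_le (t : Fin n × Fin n × Fin n) :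
    {t' ∈ orderedTriples n | ¬Disjoint (triangleEdges t) (triangleEdges t')}.card ≤ 9 * n := by
  let extend : (Fin n × Fin n) × Fin n → Finset (Fin n × Fin n × Fin n) :=
    fun ex => {(ex.1.1, ex.1.2, ex.2), (ex.1.1, ex.2, ex.1.2), (ex.2, ex.1.1, ex.1.2)}
  calc _ ≤ ((triangleEdges t ×ˢ Finset.univ).biUnion extend).card := by
        refine Finset.card_le_card fun t' ht' => ?_
        obtain ⟨e, he, he'⟩ := Finset.not_disjoint_iff.1 (Finset.mem_filter.1 ht').2
        obtain ⟨i, j, k⟩ := t'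
        simp only [triangleEdges, Finset.mem_insert, Finset.mem_singleton] at he'
        simp only [Finset.mem_biUnion, Finset.mem_product, Finset.mem_univ, and_true, extend]
        rcases he' with rfl | rfl | rfl
        · exact ⟨(_, k), he, by simp⟩
        · exact ⟨(_, i), he, by simp⟩
        · exact ⟨(_, j), he, by simp⟩
    _ ≤ (triangleEdges t ×ˢ Finset.univ).card * 3 :=
        Finset.card_biUnion_le_card_mul _ _ _ fun _ _ => Finset.card_le_three
    _ ≤ 9 * n := by
        rw [Finset.card_product, Finset.card_univ, Fintype.card_fin]
        have : (triangleEdges t).card ≤ 3 := Finset.card_le_three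
        nlinarith

lemma pHat_sub_pBar (A : Adj n) :
    pHat A - pBar p = (n.choose 2 : ℝ)⁻¹
      * ∑ e ∈ orderedPairs n, (subgraphIndicator A {e} - subgraphProb p {e}) := by
  simp only [pHat, pBar, sum_ite_lt_eq_sum_orderedPairs, subgraphIndicator, subgraphProb,
    Finset.prod_singleton, ← mul_sub, ← Finset.sum_sub_distrib]

lemma F3hat_sub_qBar (A : Adj n) :
    F3hat A - qBar p = (n.choose 3 : ℝ)⁻¹ * ∑ t ∈ orderedTriples n,
      (subgraphIndicator A (triangleEdges t) - subgraphProb p (triangleEdges t)) := by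
  rw [F3hat, qBar, sum_ite_lt_lt_eq_sum_orderedTriples, sum_ite_lt_lt_eq_sum_orderedTriples,
    ← mul_sub, ← Finset.sum_sub_distrib]
  congr 1
  refine Finset.sum_congr rfl fun t ht => ?_
  rw [subgraphIndicator, subgraphProb, prod_triangleEdges ht, prod_triangleEdges ht]

lemma integral_sq_pHat_sub_pBar_le {ρ : ℝ} (hp : ∀ i j, 0 ≤ p i j ∧ p i j ≤ 1)
    (hpρ : ∀ i j, p i j ≤ ρ) :
    ∫ A, (pHat A - pBar p) ^ 2 ∂graphMeasure n p ≤ (n.choose 2 : ℝ)⁻¹ * ρ := by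
  have hpairs : ∑ e ∈ orderedPairs n,
      ∑ e' ∈ orderedPairs n with ¬Disjoint ({e} : Finset (Fin n × Fin n)) {e'},
        ρ ^ ({e} ∪ {e'} : Finset (Fin n × Fin n)).card = n.choose 2 * ρ := by
    rw [← card_orderedPairs, ← nsmul_eq_mul, ← Finset.sum_const]
    refine Finset.sum_congr rfl fun e he => ?_
    simp [Finset.filter_eq, he]
  calc ∫ A, (pHat A - pBar p) ^ 2 ∂graphMeasure n p
      = (n.choose 2 : ℝ)⁻¹ ^ 2 * ∫ A, (∑ e ∈ orderedPairs n,
          (subgraphIndicator A {e} - subgraphProb p {e})) ^ 2 ∂graphMeasure n p := by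
        simp only [pHat_sub_pBar, mul_pow]
        exact integral_const_mul _ _
    _ ≤ (n.choose 2 : ℝ)⁻¹ ^ 2 * (n.choose 2 * ρ) := by
        rw [← hpairs]
        exact mul_le_mul_of_nonneg_left (integral_sq_sum_centered_le hp hpρ _ _) (sq_nonneg _)
    _ = (n.choose 2 : ℝ)⁻¹ * ρ := inv_sq_mul_mul_eq _ _

lemma sum_pow_card_union_triangleEdges_le {ρ : ℝ} (hρ : 0 ≤ ρ) {t : Fin n × Fin n × Fin n}
    (ht : t ∈ orderedTriples n) :
    ∑ t' ∈ orderedTriples n with ¬Disjoint (triangleEdges t) (triangleEdges t'),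
      ρ ^ (triangleEdges t ∪ triangleEdges t').card ≤ ρ ^ 3 + 9 * n * ρ ^ 5 := by
  set S := {t' ∈ orderedTriples n | ¬Disjoint (triangleEdges t) (triangleEdges t')}
  have hterm : ∀ t' ∈ S, ρ ^ (triangleEdges t ∪ triangleEdges t').card
      ≤ (if t = t' then ρ ^ 3 else 0) + ρ ^ 5 := by
    intro t' ht'
    obtain ⟨ht', hshare⟩ := Finset.mem_filter.1 ht'
    split_ifs with h
    · subst h
      rw [Finset.union_self, card_triangleEdges ht]
      linarith [pow_nonneg hρ 5]
    · rw [card_triangleEdges_union ht ht' h hshare, zero_add]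
  have htS : t ∈ S := Finset.mem_filter.2 ⟨ht, by simp [triangleEdges]⟩
  calc _ ≤ ∑ t' ∈ S, ((if t = t' then ρ ^ 3 else 0) + ρ ^ 5) := Finset.sum_le_sum hterm
    _ = ρ ^ 3 + S.card * ρ ^ 5 := by
        rw [Finset.sum_add_distrib, Finset.sum_ite_eq, if_pos htS, Finset.sum_const, nsmul_eq_mul]
    _ ≤ ρ ^ 3 + 9 * n * ρ ^ 5 := by
        gcongr
        exact_mod_cast card_triangles_sharing_edge_le t

lemma integral_sq_F3hat_sub_qBar_le {ρ : ℝ} (hp : ∀ i j, 0 ≤ p i j ∧ p i j ≤ 1)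
    (hpρ : ∀ i j, p i j ≤ ρ) (hρ : 0 ≤ ρ) :
    ∫ A, (F3hat A - qBar p) ^ 2 ∂graphMeasure n p
      ≤ (n.choose 3 : ℝ)⁻¹ * (ρ ^ 3 + 9 * n * ρ ^ 5) := by
  have htriples : ∑ t ∈ orderedTriples n,
      ∑ t' ∈ orderedTriples n with ¬Disjoint (triangleEdges t) (triangleEdges t'),
        ρ ^ (triangleEdges t ∪ triangleEdges t').card
      ≤ n.choose 3 * (ρ ^ 3 + 9 * n * ρ ^ 5) := by
    refine (Finset.sum_le_sum fun t ht => sum_pow_card_union_triangleEdges_le hρ ht).trans ?_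
    rw [Finset.sum_const, nsmul_eq_mul]
    gcongr
    exact_mod_cast card_orderedTriples_le
  calc ∫ A, (F3hat A - qBar p) ^ 2 ∂graphMeasure n p
      = (n.choose 3 : ℝ)⁻¹ ^ 2 * ∫ A, (∑ t ∈ orderedTriples n, (subgraphIndicator A
          (triangleEdges t) - subgraphProb p (triangleEdges t))) ^ 2 ∂graphMeasure n p := by
        simp only [F3hat_sub_qBar, mul_pow]
        exact integral_const_mul _ _
    _ ≤ (n.choose 3 : ℝ)⁻¹ ^ 2 * (n.choose 3 * (ρ ^ 3 + 9 * n * ρ ^ 5)) :=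
        mul_le_mul_of_nonneg_left ((integral_sq_sum_centered_le hp hpρ _ _).trans htriples)
          (sq_nonneg _)
    _ = (n.choose 3 : ℝ)⁻¹ * (ρ ^ 3 + 9 * n * ρ ^ 5) := inv_sq_mul_mul_eq _ _

lemma pBar_nonneg (hp0 : ∀ i j, 0 ≤ p i j) : 0 ≤ pBar p := by
  rw [pBar, sum_ite_lt_eq_sum_orderedPairs]
  exact mul_nonneg (by positivity) (Finset.sum_nonneg fun e _ => hp0 e.1 e.2)

lemma pBar_le {ρ : ℝ} (hpρ : ∀ i j, p i j ≤ ρ) (hρ : 0 ≤ ρ) : pBar p ≤ ρ := by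
  rw [pBar, sum_ite_lt_eq_sum_orderedPairs]
  calc (n.choose 2 : ℝ)⁻¹ * ∑ e ∈ orderedPairs n, p e.1 e.2
      ≤ (n.choose 2 : ℝ)⁻¹ * ((n.choose 2 : ℝ) * ρ) := by
        rw [← card_orderedPairs, ← nsmul_eq_mul, ← Finset.sum_const]
        gcongr with e
        exact hpρ e.1 e.2
    _ ≤ ρ := by
        rcases eq_or_ne (n.choose 2 : ℝ) 0 with h | h
        · simpa [h] using hρ
        · rw [inv_mul_cancel_left₀ h]

lemma abs_pHat_pow_three_sub_pBar_pow_three_le {ρ t : ℝ} (hp0 : ∀ i j, 0 ≤ p i j)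
    (hpρ : ∀ i j, p i j ≤ ρ) (hρ : 0 ≤ ρ) (ht : 1 ≤ t) {A : Adj n}
    (h : |pHat A - pBar p| ≤ t * √ρ / n) :
    |pHat A ^ 3 - pBar p ^ 3|
      ≤ 3 * t ^ 3 * (ρ ^ 2 * √ρ / n + ρ ^ 2 / (n : ℝ) ^ 2 + ρ * √ρ / (n : ℝ) ^ 3) :=
  (abs_pow_three_sub_pow_three_le (pBar_nonneg hp0) (pBar_le hpρ hρ) h).trans
    (cube_expansion_le_rate n hρ ht)

end RandomGraph

open RandomGraph

/-- **Lemma 1 (Gao–Lafferty).** For independent `Bernoulli(p_{ij})` edges with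
`max p_{ij} ≤ ρ`, one has, uniformly over `n` and the edge probabilities,
`|p̂³ − p̄³| = O_P(ρ^{5/2}/n + ρ²/n² + ρ^{3/2}/n³)` and
`|q̂ − q̄| = O_P(ρ^{5/2}/n + ρ^{3/2}/n^{3/2})`.  Here `ρ^{5/2} = ρ²√ρ`,
`ρ^{3/2} = ρ√ρ` and `n^{3/2} = n√n`. -/
theorem OP_pq_bounds :
    ∀ ε : ℝ, 0 < ε → ∃ M : ℝ,
      ∀ (n : ℕ) (p : Fin n → Fin n → ℝ) (ρ : ℝ), 0 ≤ ρ →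
        (∀ i j, 0 ≤ p i j ∧ p i j ≤ 1) → (∀ i j, p i j ≤ ρ) →
        ((graphMeasure n p)
            {A | M * (ρ ^ 2 * Real.sqrt ρ / n + ρ ^ 2 / (n : ℝ) ^ 2
                + ρ * Real.sqrt ρ / (n : ℝ) ^ 3) <
              |pHat A ^ 3 - pBar p ^ 3|}).toReal ≤ ε ∧
        ((graphMeasure n p)
            {A | M * (ρ ^ 2 * Real.sqrt ρ / n
                + ρ * Real.sqrt ρ / ((n : ℝ) * Real.sqrt n)) <
              |F3hat A - qBar p|}).toReal ≤ ε := by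
  intro ε hε
  -- The two Chebyshev bounds below need `8 ≤ ε t²` and `1458 ≤ ε (3 t³)²`.
  obtain ⟨t, ht, hεt⟩ := exists_one_le_and_le_mul_sq hε (c := 162) (by norm_num)
  refine ⟨3 * t ^ 3, fun n p ρ hρ hp hpρ => ⟨?_, ?_⟩⟩
  · have hsub : {A : Adj n | 3 * t ^ 3 * (ρ ^ 2 * √ρ / n + ρ ^ 2 / (n : ℝ) ^ 2
        + ρ * √ρ / (n : ℝ) ^ 3) < |pHat A ^ 3 - pBar p ^ 3|}
        ⊆ {A | t * √ρ / n < |pHat A - pBar p|} := fun A hA => lt_of_not_ge fun h =>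
      (hA.trans_le (abs_pHat_pow_three_sub_pBar_pow_three_le (fun i j => (hp i j).1) hpρ hρ ht
        h)).false
    refine (measureReal_mono hsub).trans <|
      measureReal_lt_abs_le_of_integral_sq_le Integrable.of_finite (by positivity) hε.le ?_
    calc _ ≤ (n.choose 2 : ℝ)⁻¹ * ρ := integral_sq_pHat_sub_pBar_le hp hpρ
      _ ≤ 8 * ρ / (n : ℝ) ^ 2 := inv_choose_two_mul_le n hρ
      _ ≤ ε * (t * √ρ / n) ^ 2 := by
        rw [div_pow, mul_pow, Real.sq_sqrt hρ, mul_div_assoc', ← mul_assoc]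
        gcongr
        linarith
  · refine measureReal_lt_abs_le_of_integral_sq_le Integrable.of_finite (by positivity) hε.le ?_
    calc _ ≤ (n.choose 3 : ℝ)⁻¹ * (ρ ^ 3 + 9 * n * ρ ^ 5) :=
          integral_sq_F3hat_sub_qBar_le hp hpρ hρ
      _ ≤ 1458 * (ρ ^ 5 / (n : ℝ) ^ 2 + ρ ^ 3 / (n : ℝ) ^ 3) :=
          inv_choose_three_mul_le n hρ
      _ ≤ 1458 * (ρ ^ 2 * √ρ / n + ρ * √ρ / ((n : ℝ) * √n)) ^ 2 := by
        gcongr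
        exact sq_add_sq_le_sq_rate n hρ
      _ ≤ ε * (3 * t ^ 3 * (ρ ^ 2 * √ρ / n + ρ * √ρ / ((n : ℝ) * √n))) ^ 2 := by
        rw [mul_pow, ← mul_assoc]
        gcongr
        nlinarith [pow_le_pow_right₀ ht (show 2 ≤ 6 by norm_num)]
end
end

section
/- Consider the low-rank latent variable model: ξ_{il}, (i,l) ∈ [n]×[r], i.i.d. Uniform(0,1); g_1, …, g_r : [0,1] → ℝ bounded measurable with g(ξ_i) = (g_1(ξ_{i1}), …, g_r(ξ_{ir})); given ξ, A_{ij} ~ Bernoulli(g(ξ_i)ᵀg(ξ_j)) independently for i < j, where g(ξ_i)ᵀg(ξ_j) ∈ [0,1]. Let ‖g‖_∞ = √(Σ_{l=1}^r ‖g_l‖_∞²), p̂ = (1/C(n,2)) Σ_{i<j} A_{ij}, q̂ = (1/C(n,3)) Σ_{i<j<k} A_{ij}A_{ik}A_{jk}, p̃ = (1/C(n,2)) Σ_{i<j} 𝔼[g(ξ_i)ᵀg(ξ_j)], and q̃ = (1/C(n,3)) Σ_{i<j<k} 𝔼[g(ξ_i)ᵀg(ξ_j) · g(ξ_i)ᵀg(ξ_k)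 · g(ξ_j)ᵀg(ξ_k)]. Then |p̂³ − p̃³| = O_P( ‖g‖_∞⁶/√n + ‖g‖_∞⁵/n + ‖g‖_∞⁴/n² + ‖g‖_∞³/n³ ) and |q̂ − q̃| = O_P( ‖g‖_∞⁶/√n + ‖g‖_∞⁵/n + ‖g‖_∞³/n^{3/2} ), where X_n = O_P(r_n) means: for every ε > 0 there is a constant M such that ℙ(|X_n| > M r_n) ≤ ε for all n and all admissible g. -/
open MeasureTheory ProbabilityTheory Filter Finset
open scoped ENNReal NNReal

noncomputable section

/-- The law of the array of latent variables `ξ_{il}`, i.i.d. `Uniform(0,1)`. -/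
def latentPi (n r : ℕ) : Measure (Fin n → Fin r → ℝ) := Measure.pi fun _ => cube r

/-- The (marginal) law of the adjacency array in the low-rank latent variable
model. -/
def latentMeasure (n r : ℕ) (g : Fin r → ℝ → ℝ) : Measure (Adj n) :=
  (latentPi n r).bind
    (fun ξ => graphMeasure n fun i j => ∑ l : Fin r, g l (ξ i l) * g l (ξ j l))

/-- `p̃ = (1/C(n,2)) Σ_{i<j} 𝔼[g(ξ_i)ᵀ g(ξ_j)]`. -/
def pTilde (n r : ℕ) (g : Fin r → ℝ → ℝ) : ℝ :=
  ((n.choose 2 : ℝ))⁻¹ * ∑ i : Fin n, ∑ j : Fin n,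
    if i < j then
      ∫ ξ, (∑ l : Fin r, g l (ξ i l) * g l (ξ j l)) ∂(latentPi n r)
    else 0

/-- `q̃ = (1/C(n,3)) Σ_{i<j<k} 𝔼[g(ξ_i)ᵀg(ξ_j) · g(ξ_i)ᵀg(ξ_k) · g(ξ_j)ᵀg(ξ_k)]`. -/
def qTilde (n r : ℕ) (g : Fin r → ℝ → ℝ) : ℝ :=
  ((n.choose 3 : ℝ))⁻¹ * ∑ i : Fin n, ∑ j : Fin n, ∑ k : Fin n,
    if i < j ∧ j < k then
      ∫ ξ, (∑ l : Fin r, g l (ξ i l) * g l (ξ j l))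
        * (∑ l : Fin r, g l (ξ i l) * g l (ξ k l))
        * (∑ l : Fin r, g l (ξ j l) * g l (ξ k l)) ∂(latentPi n r)
    else 0

/-!
Both statistics are normalised sums of subgraph indicators `∏_{e ∈ S} A_e`, over single edges
for `p̂` and over triangles for `q̂`. Conditioning on the latent variables,
`𝔼 ∏_{e ∈ S} A_e = 𝔼 ∏_{(i,j) ∈ S} g(ξ_i)ᵀg(ξ_j) ≤ s^|S|` with `s = Σ_l B_l²`, and two indicators
are uncorrelated when their vertex sets are disjoint, since the latent vectors of distinct
vertices are independent. Hence the variance of either statistic is at most the sum of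
`s^|S ∪ T|` over the pairs `(S, T)` sharing a vertex, and counting these pairs by the size of
`S ∪ T` gives `Var p̂ ≲ s²/n + s/n²` and `Var q̂ ≲ s⁶/n + s⁵/n² + s³/n³`. Chebyshev's inequality
gives the bound for `q̂`; for `p̂` it bounds `|p̂ - p̃| ≤ t`, and
`|p̂³ - p̃³| ≤ 3s²t + 3st² + t³` because `0 ≤ p̃ ≤ s`.
-/

namespace LowRankGraph

section Probability

variable {ι : Type*} [Fintype ι] {X : ι → Type*} [∀ i, MeasurableSpace (X i)]
  {μ : ∀ i, Measure (X i)} [∀ i, IsProbabilityMeasure (μ i)]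

theorem integral_mul_eq_mul_of_dependsOn {f h : (∀ i, X i) → ℝ} {s : Set ι}
    (hf : DependsOn f s) (hh : DependsOn h sᶜ) :
    ∫ x, f x * h x ∂Measure.pi μ = (∫ x, f x ∂Measure.pi μ) * ∫ x, h x ∂Measure.pi μ := by
  classical
  obtain ⟨x₀⟩ : Nonempty (∀ i, X i) := Measure.nonempty_of_neZero (Measure.pi μ)
  let E := MeasurableEquiv.piEquivPiSubtypeProd X (· ∈ s)
  have transfer : ∀ F : (∀ i, X i) → ℝ, ∫ x, F x ∂Measure.pi μ
      = ∫ z, F (E.symm z) ∂(Measure.pi fun i : s => μ i).prod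
          (Measure.pi fun i : {i // i ∉ s} => μ i) := fun F =>
    ((measurePreserving_piEquivPiSubtypeProd μ (· ∈ s)).symm.integral_comp
      E.symm.measurableEmbedding F).symm
  let f₁ := fun y => f (E.symm (y, (E x₀).2))
  let h₁ := fun y => h (E.symm ((E x₀).1, y))
  have hf₁ : ∀ z, f (E.symm z) = f₁ z.1 := fun z =>
    hf fun i hi => by simp [E, MeasurableEquiv.piEquivPiSubtypeProd_symm_apply, hi]
  have hh₁ : ∀ z, h (E.symm z) = h₁ z.2 := fun z =>
    hh fun i (hi : i ∉ s) => by simp [E, MeasurableEquiv.piEquivPiSubtypeProd_symm_apply, hi]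
  simp only [transfer, hf₁, hh₁, integral_prod_mul, integral_fun_fst, integral_fun_snd,
    probReal_univ, one_smul]

theorem measureReal_lt_abs_le_of_integral_sq_le {Ω : Type*} [MeasurableSpace Ω]
    {ν : Measure Ω} [IsFiniteMeasure ν] {Z : Ω → ℝ} (hZ : Integrable (fun ω => Z ω ^ 2) ν)
    {t ε : ℝ} (ht : 0 ≤ t) (hε : 0 ≤ ε) (h : ∫ ω, Z ω ^ 2 ∂ν ≤ ε * t ^ 2) :
    ν.real {ω | t < |Z ω|} ≤ ε := by
  rcases ht.eq_or_lt with rfl | ht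
  · have hZ0 : (fun ω => Z ω ^ 2) =ᵐ[ν] 0 := (integral_eq_zero_iff_of_nonneg
      (fun ω => sq_nonneg _) hZ).1 (le_antisymm (by simpa using h) (integral_nonneg fun _ => sq_nonneg _))
    have hnull : ν {ω | 0 < |Z ω|} = 0 := measure_mono_null (fun ω hω => by
      simpa [abs_pos] using hω) (ae_iff.1 hZ0)
    rwa [measureReal_def, hnull, ENNReal.toReal_zero]
  · have markov := mul_meas_ge_le_integral_of_nonneg (ae_of_all _ fun ω => sq_nonneg (Z ω)) hZ
      (t ^ 2)
    have hsub : ν.real {ω | t < |Z ω|} ≤ ν.real {ω | t ^ 2 ≤ Z ω ^ 2} :=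
      measureReal_mono fun ω (hω : t < |Z ω|) => by
        simpa [sq_abs] using pow_le_pow_left₀ ht.le hω.le 2
    nlinarith [pow_pos ht 2]

end Probability

theorem abs_pow_three_sub_pow_three_le {x y s t : ℝ} (hy : 0 ≤ y) (hys : y ≤ s)
    (hxy : |x - y| ≤ t) : |x ^ 3 - y ^ 3| ≤ 3 * s ^ 2 * t + 3 * s * t ^ 2 + t ^ 3 := by
  calc |x ^ 3 - y ^ 3| = |3 * y ^ 2 * (x - y) + 3 * y * (x - y) ^ 2 + (x - y) ^ 3| := by
        ring_nf
    _ ≤ 3 * y ^ 2 * |x - y| + 3 * y * |x - y| ^ 2 + |x - y| ^ 3 := by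
        refine (abs_add_le _ _).trans (add_le_add ((abs_add_le _ _).trans_eq ?_) ?_)
        · simp only [abs_mul, abs_pow, abs_of_nonneg hy, abs_of_pos (three_pos (α := ℝ))]
        · rw [abs_pow]
    _ ≤ 3 * s ^ 2 * t + 3 * s * t ^ 2 + t ^ 3 := by
        have hs : 0 ≤ s := hy.trans hys
        gcongr

section Model

variable {n r : ℕ}

instance : IsProbabilityMeasure unif01 :=
  ⟨by simp [unif01, Real.volume_Icc]⟩

instance : IsProbabilityMeasure (cube r) := by
  unfold cube; infer_instance

instance : IsProbabilityMeasure (latentPi n r) := by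
  unfold latentPi; infer_instance

theorem ae_mem_Icc_latentPi : ∀ᵐ ξ ∂latentPi n r, ∀ i l, ξ i l ∈ Set.Icc (0 : ℝ) 1 := by
  have hcube : ∀ᵐ x ∂cube r, ∀ l, x l ∈ Set.Icc (0 : ℝ) 1 := ae_all_iff.2 fun l =>
    (measurePreserving_eval _ l).quasiMeasurePreserving.ae (ae_restrict_mem measurableSet_Icc)
  unfold latentPi
  exact ae_all_iff.2 fun i =>
    (measurePreserving_eval (fun _ : Fin n => cube r) i).quasiMeasurePreserving.ae hcube

def InnerMemUnitInterval (g : Fin r → ℝ → ℝ) : Prop :=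
  ∀ x y : Fin r → ℝ, (∀ l, x l ∈ Set.Icc (0 : ℝ) 1) → (∀ l, y l ∈ Set.Icc (0 : ℝ) 1) →
    0 ≤ ∑ l : Fin r, g l (x l) * g l (y l) ∧ ∑ l : Fin r, g l (x l) * g l (y l) ≤ 1

def edgeProb (g : Fin r → ℝ → ℝ) (ξ : Fin n → Fin r → ℝ) (e : Fin n × Fin n) : ℝ :=
  ∑ l, g l (ξ e.1 l) * g l (ξ e.2 l)

def edgeMoment (g : Fin r → ℝ → ℝ) (S : Finset (Fin n × Fin n)) : ℝ :=
  ∫ ξ, ∏ e ∈ S, edgeProb g ξ e ∂latentPi n r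

variable {g : Fin r → ℝ → ℝ}

theorem edgeProb_mem_Icc (hg01 : InnerMemUnitInterval g) {ξ : Fin n → Fin r → ℝ}
    (hξ : ∀ i l, ξ i l ∈ Set.Icc (0 : ℝ) 1) (e : Fin n × Fin n) :
    edgeProb g ξ e ∈ Set.Icc (0 : ℝ) 1 :=
  hg01 (ξ e.1) (ξ e.2) (hξ e.1) (hξ e.2)

theorem abs_edgeProb_le {B : Fin r → ℝ} (hB : ∀ l, ∀ x ∈ Set.Icc (0 : ℝ) 1, |g l x| ≤ B l)
    {ξ : Fin n → Fin r → ℝ} (hξ : ∀ i l, ξ i l ∈ Set.Icc (0 : ℝ) 1) (e : Fin n × Fin n) :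
    |edgeProb g ξ e| ≤ ∑ l, B l ^ 2 :=
  (abs_sum_le_sum_abs _ _).trans <| sum_le_sum fun l _ => by
    rw [abs_mul, sq]
    exact mul_le_mul (hB l _ (hξ e.1 l)) (hB l _ (hξ e.2 l)) (abs_nonneg _)
      ((abs_nonneg _).trans (hB l _ (hξ e.1 l)))

theorem measurable_edgeProb (hg : ∀ l, Measurable (g l)) (e : Fin n × Fin n) :
    Measurable fun ξ : Fin n → Fin r → ℝ => edgeProb g ξ e := by
  unfold edgeProb
  fun_prop

theorem edgeMoment_nonneg (hg01 : InnerMemUnitInterval g) (S : Finset (Fin n × Fin n)) :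
    0 ≤ edgeMoment g S :=
  integral_nonneg_of_ae <| ae_mem_Icc_latentPi.mono fun _ hξ =>
    prod_nonneg fun e _ => (edgeProb_mem_Icc hg01 hξ e).1

theorem edgeMoment_le_pow_card (hg01 : InnerMemUnitInterval g) {B : Fin r → ℝ} (hB : ∀ l, ∀ x ∈ Set.Icc (0 : ℝ) 1, |g l x| ≤ B l)
    (S : Finset (Fin n × Fin n)) : edgeMoment g S ≤ (∑ l, B l ^ 2) ^ #S := by
  have hbound : ∀ᵐ ξ ∂latentPi n r, ∏ e ∈ S, edgeProb g ξ e ≤ (∑ l, B l ^ 2) ^ #S :=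
    ae_mem_Icc_latentPi.mono fun ξ hξ => (prod_le_prod (fun e _ => (edgeProb_mem_Icc hg01 hξ e).1)
      fun e _ => (le_abs_self _).trans (abs_edgeProb_le hB hξ e)).trans_eq (prod_const _)
  rw [edgeMoment]
  simpa using integral_mono_of_nonneg
    (ae_mem_Icc_latentPi.mono fun ξ hξ => prod_nonneg fun e _ => (edgeProb_mem_Icc hg01 hξ e).1)
    (integrable_const _) hbound

theorem edgeMoment_union {S T : Finset (Fin n × Fin n)} {V : Set (Fin n)}
    (hS : ∀ e ∈ S, e.1 ∈ V ∧ e.2 ∈ V) (hT : ∀ e ∈ T, e.1 ∉ V ∧ e.2 ∉ V) :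
    edgeMoment g (S ∪ T) = edgeMoment g S * edgeMoment g T := by
  have hST : Disjoint S T := disjoint_left.2 fun e heS heT => (hT e heT).1 (hS e heS).1
  simp only [edgeMoment, prod_union hST]
  refine integral_mul_eq_mul_of_dependsOn (s := V) (fun ξ η h => ?_) (fun ξ η h => ?_)
  · refine prod_congr rfl fun e he => ?_
    simp only [edgeProb, h _ (hS e he).1, h _ (hS e he).2]
  · refine prod_congr rfl fun e he => ?_
    simp only [edgeProb, h _ (hT e he).1, h _ (hT e he).2]

end Model

section Moments

variable {n r : ℕ} {g : Fin r → ℝ → ℝ}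

theorem prod_eV (A : Adj n) (S : Finset (Fin n × Fin n)) :
    ∏ e ∈ S, eV A e.1 e.2 = if ∀ e ∈ S, A e then 1 else 0 := by
  unfold eV
  convert prod_boole

theorem lintegral_prod_indicator_graphMeasure {p : Fin n → Fin n → ℝ}
    (hp : ∀ i j, p i j ∈ Set.Icc (0 : ℝ) 1) (S : Finset (Fin n × Fin n)) :
    ∫⁻ A, ∏ e ∈ S, (if A e then 1 else 0 : ℝ≥0∞) ∂graphMeasure n p
      = ∏ e ∈ S, ENNReal.ofReal (p e.1 e.2) := by
  let w : Fin n × Fin n → Bool → ℝ≥0∞ := fun e b =>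
    ENNReal.ofReal (if b then p e.1 e.2 else 1 - p e.1 e.2) * if e ∈ S then (if b then 1 else 0) else 1
  have hw : ∀ A : Adj n,
      (∏ e, ENNReal.ofReal (if A e then p e.1 e.2 else 1 - p e.1 e.2))
        * ∏ e ∈ S, (if A e then 1 else 0 : ℝ≥0∞) = ∏ e, w e (A e) := by
    intro A
    simp only [w, prod_mul_distrib, prod_ite_mem, univ_inter]
  have hsum : ∀ e, ∑ b, w e b = if e ∈ S then ENNReal.ofReal (p e.1 e.2) else 1 := by
    intro e
    have h1 : 0 ≤ 1 - p e.1 e.2 := sub_nonneg.2 (hp e.1 e.2).2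
    split_ifs with he <;>
      simp [w, he, ← ENNReal.ofReal_add (hp e.1 e.2).1 h1]
  simp only [graphMeasure, lintegral_finsetSum_measure, lintegral_smul_measure, lintegral_dirac,
    smul_eq_mul, hw]
  rw [← Fintype.prod_sum, Fintype.prod_congr _ _ hsum, prod_ite_mem, univ_inter]

theorem measurable_graphMeasure_latent (hg : ∀ l, Measurable (g l)) :
    Measurable fun ξ : Fin n → Fin r → ℝ =>
      graphMeasure n fun i j => ∑ l, g l (ξ i l) * g l (ξ j l) := by
  refine Measure.measurable_of_measurable_coe _ fun s _ => ?_
  simp only [graphMeasure, Measure.coe_finsetSum, Finset.sum_apply, Measure.smul_apply,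
    smul_eq_mul]
  refine Finset.measurable_sum _ fun A _ => (Finset.measurable_prod _ fun e _ => ?_).mul_const _
  have := measurable_edgeProb hg e
  unfold edgeProb at this
  split_ifs <;> fun_prop

theorem lintegral_prod_indicator_latentMeasure (hg : ∀ l, Measurable (g l))
    (hg01 : InnerMemUnitInterval g) (S : Finset (Fin n × Fin n)) :
    ∫⁻ A, ∏ e ∈ S, (if A e then 1 else 0 : ℝ≥0∞) ∂latentMeasure n r g
      = ∫⁻ ξ, ∏ e ∈ S, ENNReal.ofReal (edgeProb g ξ e) ∂latentPi n r := by
  rw [latentMeasure, Measure.lintegral_bind (measurable_graphMeasure_latent hg).aemeasurable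
    (measurable_of_countable _).aemeasurable]
  refine lintegral_congr_ae (ae_mem_Icc_latentPi.mono fun ξ hξ => ?_)
  exact lintegral_prod_indicator_graphMeasure (fun i j => edgeProb_mem_Icc hg01 hξ (i, j)) S

theorem isProbabilityMeasure_latentMeasure (hg : ∀ l, Measurable (g l))
    (hg01 : InnerMemUnitInterval g) : IsProbabilityMeasure (latentMeasure n r g) :=
  ⟨by simpa using lintegral_prod_indicator_latentMeasure hg hg01 (∅ : Finset (Fin n × Fin n))⟩

theorem integral_prod_eV_latentMeasure (hg : ∀ l, Measurable (g l))
    (hg01 : InnerMemUnitInterval g) (S : Finset (Fin n × Fin n)) :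
    ∫ A, ∏ e ∈ S, eV A e.1 e.2 ∂latentMeasure n r g = edgeMoment g S := by
  have heV : ∀ A : Adj n, ENNReal.ofReal (∏ e ∈ S, eV A e.1 e.2)
      = ∏ e ∈ S, (if A e then 1 else 0 : ℝ≥0∞) := fun A => by
    rw [prod_eV, prod_boole]
    split_ifs <;> simp
  have hP : ∀ᵐ ξ ∂latentPi n r, 0 ≤ ∏ e ∈ S, edgeProb g ξ e :=
    ae_mem_Icc_latentPi.mono fun ξ hξ => prod_nonneg fun e _ => (edgeProb_mem_Icc hg01 hξ e).1
  rw [integral_eq_lintegral_of_nonneg_ae (ae_of_all _ fun A => by rw [prod_eV]; positivity)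
      (measurable_of_countable _).aestronglyMeasurable,
    edgeMoment, integral_eq_lintegral_of_nonneg_ae hP
      (Finset.measurable_prod _ fun e _ => measurable_edgeProb hg e).aestronglyMeasurable,
    lintegral_congr_ae (ae_mem_Icc_latentPi.mono fun ξ hξ =>
      ENNReal.ofReal_prod_of_nonneg fun e _ => (edgeProb_mem_Icc hg01 hξ e).1)]
  simp only [heV, lintegral_prod_indicator_latentMeasure hg hg01 S]

end Moments

section SecondMoment

variable {n r : ℕ} {g : Fin r → ℝ → ℝ} {ι : Type*}

theorem prod_eV_mul_prod_eV (A : Adj n) (S T : Finset (Fin n × Fin n)) :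
    (∏ e ∈ S, eV A e.1 e.2) * ∏ e ∈ T, eV A e.1 e.2 = ∏ e ∈ S ∪ T, eV A e.1 e.2 := by
  simp only [prod_eV, forall_mem_union, ite_zero_mul_ite_zero, one_mul]

theorem integral_sq_centered_sum (hg : ∀ l, Measurable (g l)) (hg01 : InnerMemUnitInterval g)
    (T : Finset ι) (F : ι → Finset (Fin n × Fin n)) (c : ℝ) :
    ∫ A, (c * ∑ t ∈ T, (∏ e ∈ F t, eV A e.1 e.2 - edgeMoment g (F t))) ^ 2 ∂latentMeasure n r g
      = c ^ 2 * ∑ t ∈ T, ∑ u ∈ T,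
          (edgeMoment g (F t ∪ F u) - edgeMoment g (F t) * edgeMoment g (F u)) := by
  have := isProbabilityMeasure_latentMeasure (n := n) hg hg01
  have hX := integral_prod_eV_latentMeasure (n := n) hg hg01
  have expand : ∀ A : Adj n,
      (c * ∑ t ∈ T, (∏ e ∈ F t, eV A e.1 e.2 - edgeMoment g (F t))) ^ 2
        = c ^ 2 * ∑ t ∈ T, ∑ u ∈ T, (∏ e ∈ F t ∪ F u, eV A e.1 e.2
          - edgeMoment g (F t) * ∏ e ∈ F u, eV A e.1 e.2
          - edgeMoment g (F u) * ∏ e ∈ F t, eV A e.1 e.2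
          + edgeMoment g (F t) * edgeMoment g (F u)) := fun A => by
    rw [mul_pow, sq (∑ t ∈ T, _), sum_mul_sum]
    congr 1
    exact sum_congr rfl fun t _ => sum_congr rfl fun u _ => by rw [← prod_eV_mul_prod_eV]; ring
  simp only [expand, integral_const_mul]
  rw [integral_finsetSum _ fun t _ => Integrable.of_finite]
  congr 1
  refine sum_congr rfl fun t _ => ?_
  rw [integral_finsetSum _ fun u _ => Integrable.of_finite]
  refine sum_congr rfl fun u _ => ?_
  rw [integral_add Integrable.of_finite Integrable.of_finite,
    integral_sub Integrable.of_finite Integrable.of_finite,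
    integral_sub Integrable.of_finite Integrable.of_finite,
    integral_const_mul, integral_const_mul, integral_const, hX, hX, hX, probReal_univ, one_smul]
  ring

theorem integral_sq_centered_sum_le (hg : ∀ l, Measurable (g l)) (hg01 : InnerMemUnitInterval g)
    {B : Fin r → ℝ} (hB : ∀ l, ∀ x ∈ Set.Icc (0 : ℝ) 1, |g l x| ≤ B l)
    (T : Finset ι) (F : ι → Finset (Fin n × Fin n)) (V : ι → Finset (Fin n))
    (hV : ∀ t, ∀ e ∈ F t, e.1 ∈ V t ∧ e.2 ∈ V t) (c : ℝ) :
    ∫ A, (c * ∑ t ∈ T, (∏ e ∈ F t, eV A e.1 e.2 - edgeMoment g (F t))) ^ 2 ∂latentMeasure n r g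
      ≤ c ^ 2 * ∑ z ∈ T ×ˢ T with ¬Disjoint (V z.1) (V z.2),
          (∑ l, B l ^ 2) ^ #(F z.1 ∪ F z.2) := by
  rw [integral_sq_centered_sum hg hg01, ← sum_product', sum_filter]
  gcongr with z
  split_ifs with hz
  · rw [edgeMoment_union (V := V z.1) (hV z.1) fun e he =>
      ⟨disjoint_right.1 hz (hV z.2 e he).1, disjoint_right.1 hz (hV z.2 e he).2⟩, sub_self]
  · exact (sub_le_self _ (mul_nonneg (edgeMoment_nonneg hg01 _) (edgeMoment_nonneg hg01 _))).trans
      (edgeMoment_le_pow_card hg01 hB _)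

end SecondMoment

section Counting

theorem sum_le_mul_of_card_le {α : Type*} {S : Finset α} {f : α → ℝ} {a N : ℝ}
    (hf : ∀ z ∈ S, f z ≤ a) (ha : 0 ≤ a) (hN : (#S : ℝ) ≤ N) : ∑ z ∈ S, f z ≤ N * a :=
  (sum_le_card_nsmul S f a hf).trans <| by
    rw [nsmul_eq_mul]
    gcongr

theorem card_filter_not_disjoint_le {ι α : Type*} [DecidableEq ι] [DecidableEq α]
    (T : Finset ι) (F : ι → Finset α) {k m : ℕ} (hk : ∀ t ∈ T, #(F t) ≤ k)
    (hm : ∀ a, #{u ∈ T | a ∈ F u} ≤ m) :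
    #{z ∈ T ×ˢ T | ¬Disjoint (F z.1) (F z.2)} ≤ #T * k * m := by
  have hsub : {z ∈ T ×ˢ T | ¬Disjoint (F z.1) (F z.2)}
      ⊆ T.biUnion fun t => (F t).biUnion fun a => {t} ×ˢ {u ∈ T | a ∈ F u} := by
    intro z hz
    obtain ⟨hzT, hz⟩ := mem_filter.1 hz
    obtain ⟨a, ha₁, ha₂⟩ := not_disjoint_iff.1 hz
    simp only [mem_biUnion, mem_product, mem_singleton, mem_filter]
    exact ⟨z.1, (mem_product.1 hzT).1, a, ha₁, rfl, (mem_product.1 hzT).2, ha₂⟩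
  calc _ ≤ _ := card_le_card hsub
    _ ≤ ∑ t ∈ T, ∑ a ∈ F t, #({t} ×ˢ {u ∈ T | a ∈ F u}) :=
        card_biUnion_le.trans (sum_le_sum fun t _ => card_biUnion_le)
    _ ≤ ∑ t ∈ T, k * m := sum_le_sum fun t ht => by
        simp only [card_product, card_singleton, one_mul]
        exact (sum_le_card_nsmul _ _ m fun a _ => hm a).trans (by
          rw [smul_eq_mul]; exact Nat.mul_le_mul_right m (hk t ht))
    _ = #T * k * m := by rw [sum_const, smul_eq_mul, mul_assoc]

theorem card_filter_fst_eq_snd_le {α : Type*} [DecidableEq α] {S : Finset (α × α)}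
    {T : Finset α} (hS : S ⊆ T ×ˢ T) : #{z ∈ S | z.1 = z.2} ≤ #T :=
  (card_le_card fun _ hz => mem_diag.2
    ⟨(mem_product.1 (hS (mem_filter.1 hz).1)).1, (mem_filter.1 hz).2⟩).trans_eq (diag_card T)

end Counting

section Combinatorics

variable {n : ℕ}

def sortedPairs (n : ℕ) : Finset (Fin n × Fin n) := {e | e.1 < e.2}

def sortedTriples (n : ℕ) : Finset (Fin n × Fin n × Fin n) := {t | t.1 < t.2.1 ∧ t.2.1 < t.2.2}

def pairVerts (e : Fin n × Fin n) : Finset (Fin n) := {e.1, e.2}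

def triangleVerts (t : Fin n × Fin n × Fin n) : Finset (Fin n) := {t.1, t.2.1, t.2.2}

def triangleEdges (t : Fin n × Fin n × Fin n) : Finset (Fin n × Fin n) :=
  {(t.1, t.2.1), (t.2.1, t.2.2), (t.1, t.2.2)}

theorem card_sortedPairs : #(sortedPairs n) = n.choose 2 := by
  rw [sortedPairs, Fintype.card_product_filter_lt, Fintype.card_fin]

theorem card_sortedPairs_le : #(sortedPairs n) ≤ n ^ 2 :=
  (card_le_univ _).trans_eq (by simp [sq])

theorem card_sortedTriples_le : #(sortedTriples n) ≤ n ^ 3 :=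
  (card_le_univ _).trans_eq (by simp; ring)

theorem mem_triangleVerts_of_mem_triangleEdges {t : Fin n × Fin n × Fin n} {e : Fin n × Fin n}
    (he : e ∈ triangleEdges t) : e.1 ∈ triangleVerts t ∧ e.2 ∈ triangleVerts t := by
  simp only [triangleEdges, mem_insert, mem_singleton] at he
  rcases he with rfl | rfl | rfl <;> simp [triangleVerts]

theorem card_triangleEdges {t : Fin n × Fin n × Fin n} (ht : t ∈ sortedTriples n) :
    #(triangleEdges t) = 3 := by
  obtain ⟨a, b, c⟩ := t
  obtain ⟨h₁, h₂⟩ : a < b ∧ b < c := by simpa [sortedTriples] using ht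
  rw [triangleEdges, card_insert_of_notMem, card_pair] <;>
    simp [h₁.ne, h₁.ne', h₂.ne]

theorem eq_of_two_triangleEdges {t u : Fin n × Fin n × Fin n} (ht : t ∈ sortedTriples n)
    (hu : u ∈ sortedTriples n) {e f : Fin n × Fin n} (hef : e ≠ f)
    (he : e ∈ triangleEdges t ∩ triangleEdges u) (hf : f ∈ triangleEdges t ∩ triangleEdges u) :
    t = u := by
  obtain ⟨a, b, c⟩ := t
  obtain ⟨a', b', c'⟩ := u
  simp only [sortedTriples, triangleEdges, mem_filter, mem_univ, true_and, mem_inter, mem_insert,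
    mem_singleton] at ht hu he hf
  obtain ⟨he, he'⟩ := he
  obtain ⟨hf, hf'⟩ := hf
  rcases he with rfl | rfl | rfl <;> rcases hf with rfl | rfl | rfl <;> (try exact absurd rfl hef) <;>
    simp only [Prod.mk.injEq, ne_eq, not_and, Fin.ext_iff, Fin.lt_def] at he' hf' hef ht hu ⊢ <;>
    omega

theorem card_triangleEdges_union {t u : Fin n × Fin n × Fin n} (ht : t ∈ sortedTriples n)
    (hu : u ∈ sortedTriples n) (htu : t ≠ u) :
    #(triangleEdges t ∪ triangleEdges u)
      = if Disjoint (triangleEdges t) (triangleEdges u) then 6 else 5 := by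
  have hinter : #(triangleEdges t ∩ triangleEdges u) ≤ 1 := card_le_one.2 fun e he f hf =>
    by_contra fun hef => htu (eq_of_two_triangleEdges ht hu hef he hf)
  have := card_union_add_card_inter (triangleEdges t) (triangleEdges u)
  rw [card_triangleEdges ht, card_triangleEdges hu] at this
  split_ifs with hd
  · rw [disjoint_iff_inter_eq_empty.1 hd, card_empty] at this
    omega
  · have : 0 < #(triangleEdges t ∩ triangleEdges u) :=
      card_pos.2 (not_disjoint_iff_nonempty_inter.1 hd)
    omega

theorem card_sortedPairs_filter_mem_pairVerts_le (v : Fin n) :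
    #{f ∈ sortedPairs n | v ∈ pairVerts f} ≤ 2 * n := by
  have hsub : {f ∈ sortedPairs n | v ∈ pairVerts f} ⊆ {v} ×ˢ univ ∪ univ ×ˢ {v} := by
    intro f hf
    simp only [pairVerts, mem_filter, mem_insert, mem_singleton] at hf
    rcases hf.2 with h | h <;> simp [h]
  calc _ ≤ _ := card_le_card hsub
    _ ≤ _ := card_union_le _ _
    _ = 2 * n := by simp only [card_product, card_singleton, card_univ, Fintype.card_fin]; ring

theorem card_sortedTriples_filter_mem_triangleVerts_le (v : Fin n) :
    #{u ∈ sortedTriples n | v ∈ triangleVerts u} ≤ 3 * n ^ 2 := by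
  have hsub : {u ∈ sortedTriples n | v ∈ triangleVerts u}
      ⊆ {v} ×ˢ univ ∪ univ ×ˢ {v} ×ˢ univ ∪ univ ×ˢ univ ×ˢ {v} := by
    intro u hu
    simp only [triangleVerts, mem_filter, mem_insert, mem_singleton] at hu
    rcases hu.2 with h | h | h <;> simp [h]
  calc _ ≤ _ := card_le_card hsub
    _ ≤ _ := (card_union_le _ _).trans (Nat.add_le_add_right (card_union_le _ _) _)
    _ = 3 * n ^ 2 := by
      simp only [card_product, card_singleton, card_univ, Fintype.card_fin, Fintype.card_prod]
      ring

theorem card_sortedTriples_filter_mem_triangleEdges_le (e : Fin n × Fin n) :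
    #{u ∈ sortedTriples n | e ∈ triangleEdges u} ≤ 3 * n := by
  have hsub : {u ∈ sortedTriples n | e ∈ triangleEdges u}
      ⊆ {e.1} ×ˢ {e.2} ×ˢ univ ∪ univ ×ˢ {e.1} ×ˢ {e.2} ∪ {e.1} ×ˢ univ ×ˢ {e.2} := by
    intro u hu
    simp only [triangleEdges, mem_filter, mem_insert, mem_singleton] at hu
    rcases hu.2 with rfl | rfl | rfl <;> simp
  calc _ ≤ _ := card_le_card hsub
    _ ≤ _ := (card_union_le _ _).trans (Nat.add_le_add_right (card_union_le _ _) _)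
    _ = 3 * n := by
      simp only [card_product, card_singleton, card_univ, Fintype.card_fin]
      ring

theorem card_vertex_sharing_sortedPairs_le :
    #{z ∈ sortedPairs n ×ˢ sortedPairs n | ¬Disjoint (pairVerts z.1) (pairVerts z.2)}
      ≤ 4 * n ^ 3 :=
  (card_filter_not_disjoint_le _ _ (fun _ _ => card_le_two)
    card_sortedPairs_filter_mem_pairVerts_le).trans (by nlinarith [card_sortedPairs_le (n := n)])

theorem card_vertex_sharing_sortedTriples_le :
    #{z ∈ sortedTriples n ×ˢ sortedTriples n |
      ¬Disjoint (triangleVerts z.1) (triangleVerts z.2)} ≤ 9 * n ^ 5 :=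
  (card_filter_not_disjoint_le _ _ (fun _ _ => card_le_three)
    card_sortedTriples_filter_mem_triangleVerts_le).trans
    (by nlinarith [card_sortedTriples_le (n := n)])

theorem card_edge_sharing_sortedTriples_le :
    #{z ∈ sortedTriples n ×ˢ sortedTriples n |
      ¬Disjoint (triangleEdges z.1) (triangleEdges z.2)} ≤ 9 * n ^ 4 :=
  (card_filter_not_disjoint_le _ _ (fun _ ht => (card_triangleEdges ht).le)
    card_sortedTriples_filter_mem_triangleEdges_le).trans
    (by nlinarith [card_sortedTriples_le (n := n)])

theorem sum_pow_card_overlapping_pairs_le {s : ℝ} (hs : 0 ≤ s) :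
    ∑ z ∈ sortedPairs n ×ˢ sortedPairs n with ¬Disjoint (pairVerts z.1) (pairVerts z.2),
      s ^ #({z.1} ∪ {z.2}) ≤ n ^ 2 * s + 4 * n ^ 3 * s ^ 2 := by
  set O := {z ∈ sortedPairs n ×ˢ sortedPairs n | ¬Disjoint (pairVerts z.1) (pairVerts z.2)}
  have hdiag : ∑ z ∈ O with z.1 = z.2, s ^ #({z.1} ∪ {z.2}) ≤ n ^ 2 * s := by
    have hO : O ⊆ sortedPairs n ×ˢ sortedPairs n := filter_subset _ _
    have hcard := (card_filter_fst_eq_snd_le hO).trans card_sortedPairs_le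
    refine sum_le_mul_of_card_le (fun z hz => ?_) hs (by exact_mod_cast hcard)
    rw [(mem_filter.1 hz).2, union_self, card_singleton, pow_one]
  have hoff : ∑ z ∈ O with ¬z.1 = z.2, s ^ #({z.1} ∪ {z.2}) ≤ 4 * n ^ 3 * s ^ 2 := by
    have hcard : #{z ∈ O | ¬z.1 = z.2} ≤ 4 * n ^ 3 :=
      (card_filter_le _ _).trans card_vertex_sharing_sortedPairs_le
    refine sum_le_mul_of_card_le (fun z hz => ?_) (sq_nonneg s) (by exact_mod_cast hcard)
    rw [← insert_eq, card_pair (mem_filter.1 hz).2]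
  rw [← sum_filter_add_sum_filter_not O fun z => z.1 = z.2]
  exact add_le_add hdiag hoff

theorem sum_pow_card_overlapping_triples_le {s : ℝ} (hs : 0 ≤ s) :
    ∑ z ∈ sortedTriples n ×ˢ sortedTriples n with
        ¬Disjoint (triangleVerts z.1) (triangleVerts z.2),
      s ^ #(triangleEdges z.1 ∪ triangleEdges z.2)
      ≤ n ^ 3 * s ^ 3 + 9 * n ^ 4 * s ^ 5 + 9 * n ^ 5 * s ^ 6 := by
  set O := {z ∈ sortedTriples n ×ˢ sortedTriples n |
    ¬Disjoint (triangleVerts z.1) (triangleVerts z.2)}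
  set O' := {z ∈ O | ¬z.1 = z.2}
  have hO : O ⊆ sortedTriples n ×ˢ sortedTriples n := filter_subset _ _
  have hO' : ∀ z ∈ O', z.1 ∈ sortedTriples n ∧ z.2 ∈ sortedTriples n ∧ z.1 ≠ z.2 := fun z hz =>
    ⟨(mem_product.1 (hO (mem_filter.1 hz).1)).1, (mem_product.1 (hO (mem_filter.1 hz).1)).2,
      (mem_filter.1 hz).2⟩
  have hdiag : ∑ z ∈ O with z.1 = z.2, s ^ #(triangleEdges z.1 ∪ triangleEdges z.2)
      ≤ n ^ 3 * s ^ 3 := by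
    have hcard := (card_filter_fst_eq_snd_le hO).trans card_sortedTriples_le
    refine sum_le_mul_of_card_le (fun z hz => ?_) (by positivity) (by exact_mod_cast hcard)
    rw [(mem_filter.1 hz).2, union_self,
      card_triangleEdges (mem_product.1 (hO (mem_filter.1 hz).1)).2]
  have hdisj : ∑ z ∈ O' with Disjoint (triangleEdges z.1) (triangleEdges z.2),
      s ^ #(triangleEdges z.1 ∪ triangleEdges z.2) ≤ 9 * n ^ 5 * s ^ 6 := by
    have hcard : #{z ∈ O' | Disjoint (triangleEdges z.1) (triangleEdges z.2)} ≤ 9 * n ^ 5 :=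
      ((card_filter_le _ _).trans (card_filter_le _ _)).trans card_vertex_sharing_sortedTriples_le
    refine sum_le_mul_of_card_le (fun z hz => ?_) (by positivity) (by exact_mod_cast hcard)
    obtain ⟨ht, hu, htu⟩ := hO' z (mem_filter.1 hz).1
    rw [card_triangleEdges_union ht hu htu, if_pos (mem_filter.1 hz).2]
  have hshared : ∑ z ∈ O' with ¬Disjoint (triangleEdges z.1) (triangleEdges z.2),
      s ^ #(triangleEdges z.1 ∪ triangleEdges z.2) ≤ 9 * n ^ 4 * s ^ 5 := by
    have hcard : #{z ∈ O' | ¬Disjoint (triangleEdges z.1) (triangleEdges z.2)} ≤ 9 * n ^ 4 :=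
      (card_le_card (filter_subset_filter _ ((filter_subset _ _).trans hO))).trans
        card_edge_sharing_sortedTriples_le
    refine sum_le_mul_of_card_le (fun z hz => ?_) (by positivity) (by exact_mod_cast hcard)
    obtain ⟨ht, hu, htu⟩ := hO' z (mem_filter.1 hz).1
    rw [card_triangleEdges_union ht hu htu, if_neg (mem_filter.1 hz).2]
  rw [← sum_filter_add_sum_filter_not O fun z => z.1 = z.2,
    ← sum_filter_add_sum_filter_not O' fun z => Disjoint (triangleEdges z.1) (triangleEdges z.2)]
  linarith

theorem prod_triangleEdges {t : Fin n × Fin n × Fin n} (ht : t ∈ sortedTriples n)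
    (f : Fin n × Fin n → ℝ) :
    ∏ e ∈ triangleEdges t, f e = f (t.1, t.2.1) * f (t.2.1, t.2.2) * f (t.1, t.2.2) := by
  obtain ⟨a, b, c⟩ := t
  obtain ⟨h₁, h₂⟩ : a < b ∧ b < c := by simpa [sortedTriples] using ht
  rw [triangleEdges, prod_insert, prod_pair, mul_assoc] <;> simp [h₁.ne, h₁.ne', h₂.ne]

theorem sum_ite_lt (f : Fin n → Fin n → ℝ) :
    ∑ i, ∑ j, (if i < j then f i j else 0) = ∑ e ∈ sortedPairs n, f e.1 e.2 := by
  rw [sortedPairs, sum_filter, Fintype.sum_prod_type]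

theorem sum_ite_lt_lt (f : Fin n → Fin n → Fin n → ℝ) :
    ∑ i, ∑ j, ∑ k, (if i < j ∧ j < k then f i j k else 0)
      = ∑ t ∈ sortedTriples n, f t.1 t.2.1 t.2.2 := by
  simp only [sortedTriples, sum_filter, Fintype.sum_prod_type]

end Combinatorics

section Statistics

variable {n r : ℕ} {g : Fin r → ℝ → ℝ}

theorem pHat_sub_pTilde (A : Adj n) :
    pHat A - pTilde n r g = (n.choose 2 : ℝ)⁻¹ * ∑ e ∈ sortedPairs n,
      (∏ e' ∈ {e}, eV A e'.1 e'.2 - edgeMoment g {e}) := by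
  simp only [pHat, pTilde, sum_ite_lt, ← mul_sub, ← sum_sub_distrib, prod_singleton, edgeMoment,
    edgeProb]

theorem F3hat_sub_qTilde (A : Adj n) :
    F3hat A - qTilde n r g = (n.choose 3 : ℝ)⁻¹ * ∑ t ∈ sortedTriples n,
      (∏ e ∈ triangleEdges t, eV A e.1 e.2 - edgeMoment g (triangleEdges t)) := by
  rw [F3hat, qTilde, sum_ite_lt_lt, sum_ite_lt_lt, ← mul_sub, ← sum_sub_distrib]
  refine congrArg _ (sum_congr rfl fun t ht => ?_)
  simp only [edgeMoment, prod_triangleEdges ht, edgeProb]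
  congr 2
  funext ξ
  ring

theorem pTilde_mem_Icc (hg01 : InnerMemUnitInterval g) {B : Fin r → ℝ}
    (hB : ∀ l, ∀ x ∈ Set.Icc (0 : ℝ) 1, |g l x| ≤ B l) :
    pTilde n r g ∈ Set.Icc 0 (∑ l, B l ^ 2) := by
  have hs : 0 ≤ ∑ l, B l ^ 2 := sum_nonneg fun l _ => sq_nonneg _
  have hp : pTilde n r g = (n.choose 2 : ℝ)⁻¹ * ∑ e ∈ sortedPairs n, edgeMoment g {e} := by
    simp only [pTilde, sum_ite_lt, edgeMoment, prod_singleton, edgeProb]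
  refine ⟨hp ▸ mul_nonneg (by positivity) (sum_nonneg fun e _ => edgeMoment_nonneg hg01 _), ?_⟩
  have hsum : ∑ e ∈ sortedPairs n, edgeMoment g {e} ≤ n.choose 2 * ∑ l, B l ^ 2 :=
    sum_le_mul_of_card_le (fun e _ => (edgeMoment_le_pow_card hg01 hB _).trans_eq (by simp)) hs
      (by rw [card_sortedPairs])
  rcases eq_or_ne (n.choose 2 : ℝ) 0 with h0 | h0
  · simp [hp, h0, hs]
  · rw [hp, inv_mul_le_iff₀ (lt_of_le_of_ne (Nat.cast_nonneg _) h0.symm)]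
    exact hsum

theorem inv_choose_two_le (n : ℕ) : (n.choose 2 : ℝ)⁻¹ ≤ 4 / n ^ 2 := by
  rcases lt_or_ge n 2 with hn | hn
  · rw [Nat.choose_eq_zero_of_lt hn, Nat.cast_zero, inv_zero]
    positivity
  · have hn' : (2 : ℝ) ≤ n := by exact_mod_cast hn
    rw [Nat.cast_choose_two, inv_div, div_le_div_iff₀ (by nlinarith) (by positivity)]
    nlinarith

theorem cast_choose_three (n : ℕ) : (n.choose 3 : ℝ) = n * (n - 1) * (n - 2) / 6 := by
  induction n with
  | zero => simp
  | succ m ih =>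
    rw [Nat.choose_succ_succ', Nat.cast_add, ih, Nat.cast_choose_two]
    push_cast
    ring

theorem inv_choose_three_le (n : ℕ) : (n.choose 3 : ℝ)⁻¹ ≤ 36 / n ^ 3 := by
  rcases lt_or_ge n 3 with hn | hn
  · rw [Nat.choose_eq_zero_of_lt hn, Nat.cast_zero, inv_zero]
    positivity
  · have hn' : (3 : ℝ) ≤ n := by exact_mod_cast hn
    have hpos : 0 < (n : ℝ) * (n - 1) * (n - 2) := by
      apply mul_pos (mul_pos _ _) _ <;> linarith
    rw [cast_choose_three, inv_div, div_le_div_iff₀ hpos (by positivity)]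
    nlinarith [mul_nonneg (by linarith : (0 : ℝ) ≤ n - 3) (by positivity : (0 : ℝ) ≤ n ^ 2)]

theorem integral_sq_pHat_sub_pTilde_le (hg : ∀ l, Measurable (g l)) (hg01 : InnerMemUnitInterval g)
    {B : Fin r → ℝ} (hB : ∀ l, ∀ x ∈ Set.Icc (0 : ℝ) 1, |g l x| ≤ B l) :
    ∫ A, (pHat A - pTilde n r g) ^ 2 ∂latentMeasure n r g
      ≤ 64 * ((∑ l, B l ^ 2) ^ 2 / n + (∑ l, B l ^ 2) / n ^ 2) := by
  set s := ∑ l, B l ^ 2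
  have hs : 0 ≤ s := sum_nonneg fun l _ => sq_nonneg _
  have hV : ∀ e, ∀ e' ∈ ({e} : Finset (Fin n × Fin n)), e'.1 ∈ pairVerts e ∧ e'.2 ∈ pairVerts e :=
    fun e e' he' => by simp [mem_singleton.1 he', pairVerts]
  simp only [pHat_sub_pTilde]
  refine (integral_sq_centered_sum_le hg hg01 hB _ _ _ hV _).trans ?_
  calc _ ≤ (4 / n ^ 2 : ℝ) ^ 2 * (n ^ 2 * s + 4 * n ^ 3 * s ^ 2) := by
        gcongr
        · exact inv_choose_two_le n
        · exact sum_pow_card_overlapping_pairs_le hs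
    _ ≤ 64 * (s ^ 2 / n + s / n ^ 2) := by
        rcases eq_or_ne (n : ℝ) 0 with hn | hn
        · simp [hn]
        · rw [show (4 / n ^ 2 : ℝ) ^ 2 * (n ^ 2 * s + 4 * n ^ 3 * s ^ 2)
              = 16 * (s / n ^ 2) + 64 * (s ^ 2 / n) by field_simp; ring]
          nlinarith [div_nonneg hs (sq_nonneg (n : ℝ))]

theorem integral_sq_F3hat_sub_qTilde_le (hg : ∀ l, Measurable (g l)) (hg01 : InnerMemUnitInterval g)
    {B : Fin r → ℝ} (hB : ∀ l, ∀ x ∈ Set.Icc (0 : ℝ) 1, |g l x| ≤ B l) :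
    ∫ A, (F3hat A - qTilde n r g) ^ 2 ∂latentMeasure n r g
      ≤ 11664 * ((∑ l, B l ^ 2) ^ 6 / n + (∑ l, B l ^ 2) ^ 5 / n ^ 2
        + (∑ l, B l ^ 2) ^ 3 / n ^ 3) := by
  set s := ∑ l, B l ^ 2
  have hs : 0 ≤ s := sum_nonneg fun l _ => sq_nonneg _
  simp only [F3hat_sub_qTilde]
  refine (integral_sq_centered_sum_le hg hg01 hB _ _ _
    (fun t e he => mem_triangleVerts_of_mem_triangleEdges he) _).trans ?_
  calc _ ≤ (36 / n ^ 3 : ℝ) ^ 2 * (n ^ 3 * s ^ 3 + 9 * n ^ 4 * s ^ 5 + 9 * n ^ 5 * s ^ 6) := by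
        gcongr
        · exact inv_choose_three_le n
        · exact sum_pow_card_overlapping_triples_le hs
    _ ≤ 11664 * (s ^ 6 / n + s ^ 5 / n ^ 2 + s ^ 3 / n ^ 3) := by
        rcases eq_or_ne (n : ℝ) 0 with hn | hn
        · simp [hn]
        · rw [show (36 / n ^ 3 : ℝ) ^ 2 * (n ^ 3 * s ^ 3 + 9 * n ^ 4 * s ^ 5 + 9 * n ^ 5 * s ^ 6)
              = 1296 * (s ^ 3 / n ^ 3) + 11664 * (s ^ 5 / n ^ 2) + 11664 * (s ^ 6 / n) by
              field_simp; ring]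
          nlinarith [div_nonneg (pow_nonneg hs 3) (pow_nonneg (Nat.cast_nonneg n) 3)]

end Statistics

section Rates

def pRate (s : ℝ) (n : ℕ) : ℝ :=
  s ^ 3 / Real.sqrt n + s ^ 2 * Real.sqrt s / n + s ^ 2 / (n : ℝ) ^ 2
    + s * Real.sqrt s / (n : ℝ) ^ 3

def qRate (s : ℝ) (n : ℕ) : ℝ :=
  s ^ 3 / Real.sqrt n + s ^ 2 * Real.sqrt s / n + s * Real.sqrt s / ((n : ℝ) * Real.sqrt n)

theorem pRate_nonneg {s : ℝ} (hs : 0 ≤ s) (n : ℕ) : 0 ≤ pRate s n := by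
  unfold pRate
  positivity

theorem qRate_nonneg {s : ℝ} (hs : 0 ≤ s) (n : ℕ) : 0 ≤ qRate s n := by
  unfold qRate
  positivity

/-- `cube_deviation_le_pRate` after the substitution `s = b²`, `n = u⁻²`. -/
theorem cube_deviation_poly_le {M b u : ℝ} (hM : 0 ≤ M) (hb : 0 ≤ b) (hu : 0 ≤ u) (hu1 : u ≤ 1) :
    3 * (b ^ 2) ^ 2 * (M * (b ^ 2 * u + b * u ^ 2))
        + 3 * b ^ 2 * (M * (b ^ 2 * u + b * u ^ 2)) ^ 2 + (M * (b ^ 2 * u + b * u ^ 2)) ^ 3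
      ≤ (3 * M + 6 * M ^ 2 + 4 * M ^ 3)
        * (b ^ 6 * u + b ^ 5 * u ^ 2 + b ^ 4 * u ^ 4 + b ^ 3 * u ^ 6) := by
  set R := b ^ 6 * u + b ^ 5 * u ^ 2 + b ^ 4 * u ^ 4 + b ^ 3 * u ^ 6
  set x := b ^ 2 * u
  set y := b * u ^ 2
  have hx : 0 ≤ x := by positivity
  have hy : 0 ≤ y := by positivity
  have hu2 : u ^ 2 ≤ u := by nlinarith
  have hu3 : u ^ 3 ≤ u := by nlinarith
  have h₁ : b ^ 4 * (x + y) ≤ R := by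
    have : 0 ≤ b ^ 4 * u ^ 4 + b ^ 3 * u ^ 6 := by positivity
    linarith [show b ^ 4 * (x + y) = b ^ 6 * u + b ^ 5 * u ^ 2 by ring]
  have h₂ : b ^ 2 * (x + y) ^ 2 ≤ 2 * R := by
    have hxy : (x + y) ^ 2 ≤ 2 * (x ^ 2 + y ^ 2) := by nlinarith [sq_nonneg (x - y)]
    have : b ^ 6 * u ^ 2 ≤ b ^ 6 * u := by gcongr
    have : 0 ≤ b ^ 5 * u ^ 2 + b ^ 3 * u ^ 6 := by positivity
    nlinarith [mul_le_mul_of_nonneg_left hxy (sq_nonneg b)]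
  have h₃ : (x + y) ^ 3 ≤ 4 * R := by
    have hxy : (x + y) ^ 3 ≤ 4 * (x ^ 3 + y ^ 3) := by
      nlinarith [mul_nonneg (add_nonneg hx hy) (sq_nonneg (x - y))]
    have : b ^ 6 * u ^ 3 ≤ b ^ 6 * u := by gcongr
    have : 0 ≤ b ^ 5 * u ^ 2 + b ^ 4 * u ^ 4 := by positivity
    nlinarith
  calc _ = 3 * M * (b ^ 4 * (x + y)) + 3 * M ^ 2 * (b ^ 2 * (x + y) ^ 2)
        + M ^ 3 * (x + y) ^ 3 := by ring
    _ ≤ 3 * M * R + 3 * M ^ 2 * (2 * R) + M ^ 3 * (4 * R) := by gcongr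
    _ = _ := by ring

theorem cube_deviation_le_pRate {s M : ℝ} (hs : 0 ≤ s) (hM : 0 ≤ M) (n : ℕ) :
    3 * s ^ 2 * (M * (s / Real.sqrt n + Real.sqrt s / n))
        + 3 * s * (M * (s / Real.sqrt n + Real.sqrt s / n)) ^ 2
        + (M * (s / Real.sqrt n + Real.sqrt s / n)) ^ 3
      ≤ (3 * M + 6 * M ^ 2 + 4 * M ^ 3) * pRate s n := by
  obtain ⟨b, hb, rfl⟩ : ∃ b, 0 ≤ b ∧ s = b ^ 2 := ⟨_, Real.sqrt_nonneg s, (Real.sq_sqrt hs).symm⟩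
  set u := (Real.sqrt n)⁻¹
  have hu1 : u ≤ 1 := by
    rcases n.eq_zero_or_pos with rfl | hn
    · simp [u]
    · exact inv_le_one_of_one_le₀ (Real.one_le_sqrt.2 (by exact_mod_cast hn))
  have hn : (n : ℝ)⁻¹ = u ^ 2 := by rw [inv_pow, Real.sq_sqrt (Nat.cast_nonneg _)]
  convert cube_deviation_poly_le hM hb (inv_nonneg.2 (Real.sqrt_nonneg _)) hu1 using 1
  · simp only [Real.sqrt_sq hb, div_eq_mul_inv, hn]
    ring
  · simp only [pRate, Real.sqrt_sq hb, div_eq_mul_inv, ← inv_pow, hn]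
    ring

theorem sq_div_add_div_sq_le_sq {s : ℝ} (hs : 0 ≤ s) (n : ℕ) :
    s ^ 2 / n + s / n ^ 2 ≤ (s / Real.sqrt n + Real.sqrt s / n) ^ 2 := by
  have h₁ : (s / Real.sqrt n) ^ 2 = s ^ 2 / n := by
    rw [div_pow, Real.sq_sqrt (Nat.cast_nonneg _)]
  have h₂ : (Real.sqrt s / n) ^ 2 = s / n ^ 2 := by rw [div_pow, Real.sq_sqrt hs]
  nlinarith [show 0 ≤ s / Real.sqrt n * (Real.sqrt s / n) by positivity]

theorem pow_div_add_le_qRate_sq {s : ℝ} (hs : 0 ≤ s) (n : ℕ) :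
    s ^ 6 / n + s ^ 5 / n ^ 2 + s ^ 3 / n ^ 3 ≤ qRate s n ^ 2 := by
  have hn := Real.sq_sqrt (Nat.cast_nonneg n)
  have hs' := Real.sq_sqrt hs
  have h₁ : (s ^ 3 / Real.sqrt n) ^ 2 = s ^ 6 / n := by rw [div_pow, hn]; ring
  have h₂ : (s ^ 2 * Real.sqrt s / n) ^ 2 = s ^ 5 / n ^ 2 := by rw [div_pow, mul_pow, hs']; ring
  have h₃ : (s * Real.sqrt s / (n * Real.sqrt n)) ^ 2 = s ^ 3 / n ^ 3 := by
    rw [div_pow, mul_pow, mul_pow, hs', hn]; ring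
  have ha : 0 ≤ s ^ 3 / Real.sqrt n := by positivity
  have hb : 0 ≤ s ^ 2 * Real.sqrt s / n := by positivity
  have hc : 0 ≤ s * Real.sqrt s / (n * Real.sqrt n) := by positivity
  rw [qRate]
  nlinarith [mul_nonneg ha hb, mul_nonneg ha hc, mul_nonneg hb hc]

end Rates

section Tails

variable {n r : ℕ} {g : Fin r → ℝ → ℝ} {B : Fin r → ℝ}

theorem measureReal_lt_abs_pHat_pow_three_sub_le (hg : ∀ l, Measurable (g l))
    (hg01 : InnerMemUnitInterval g) (hB : ∀ l, ∀ x ∈ Set.Icc (0 : ℝ) 1, |g l x| ≤ B l)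
    {ε M₁ M : ℝ} (hε : 0 ≤ ε) (hM₁ : 0 ≤ M₁) (hεM₁ : 64 ≤ ε * M₁ ^ 2)
    (hM : 3 * M₁ + 6 * M₁ ^ 2 + 4 * M₁ ^ 3 ≤ M) :
    (latentMeasure n r g).real
      {A | M * pRate (∑ l, B l ^ 2) n < |pHat A ^ 3 - pTilde n r g ^ 3|} ≤ ε := by
  have := isProbabilityMeasure_latentMeasure (n := n) hg hg01
  set s := ∑ l, B l ^ 2
  have hs : 0 ≤ s := sum_nonneg fun l _ => sq_nonneg _
  set t := M₁ * (s / Real.sqrt n + Real.sqrt s / n)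
  have hsub : {A : Adj n | M * pRate s n < |pHat A ^ 3 - pTilde n r g ^ 3|}
      ⊆ {A | t < |pHat A - pTilde n r g|} := fun A hA => by
    by_contra h
    have hcube := abs_pow_three_sub_pow_three_le (pTilde_mem_Icc hg01 hB).1
      (pTilde_mem_Icc hg01 hB).2 (not_lt.1 h)
    have := mul_le_mul_of_nonneg_right hM (pRate_nonneg hs n)
    exact (lt_irrefl _) ((hA.trans_le hcube).trans_le
      ((cube_deviation_le_pRate hs hM₁ n).trans this))
  refine (measureReal_mono hsub).trans (measureReal_lt_abs_le_of_integral_sq_le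
    Integrable.of_finite (by positivity) hε ?_)
  calc _ ≤ 64 * (s ^ 2 / n + s / n ^ 2) := integral_sq_pHat_sub_pTilde_le hg hg01 hB
    _ ≤ ε * M₁ ^ 2 * (s / Real.sqrt n + Real.sqrt s / n) ^ 2 := by
        gcongr
        exact sq_div_add_div_sq_le_sq hs n
    _ = ε * t ^ 2 := by ring

theorem measureReal_lt_abs_F3hat_sub_le (hg : ∀ l, Measurable (g l))
    (hg01 : InnerMemUnitInterval g) (hB : ∀ l, ∀ x ∈ Set.Icc (0 : ℝ) 1, |g l x| ≤ B l)
    {ε M₂ M : ℝ} (hε : 0 ≤ ε) (hM₂ : 0 ≤ M₂) (hεM₂ : 11664 ≤ ε * M₂ ^ 2) (hM : M₂ ≤ M) :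
    (latentMeasure n r g).real
      {A | M * qRate (∑ l, B l ^ 2) n < |F3hat A - qTilde n r g|} ≤ ε := by
  have := isProbabilityMeasure_latentMeasure (n := n) hg hg01
  set s := ∑ l, B l ^ 2
  have hs : 0 ≤ s := sum_nonneg fun l _ => sq_nonneg _
  refine measureReal_lt_abs_le_of_integral_sq_le Integrable.of_finite
    (mul_nonneg (hM₂.trans hM) (qRate_nonneg hs n)) hε ?_
  calc _ ≤ 11664 * (s ^ 6 / n + s ^ 5 / n ^ 2 + s ^ 3 / n ^ 3) :=
        integral_sq_F3hat_sub_qTilde_le hg hg01 hB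
    _ ≤ ε * M ^ 2 * qRate s n ^ 2 := by
        gcongr
        · exact hεM₂.trans (by gcongr)
        · exact pow_div_add_le_qRate_sq hs n
    _ = ε * (M * qRate s n) ^ 2 := by ring

theorem exists_nonneg_le_mul_sq {ε : ℝ} (hε : 0 < ε) {C : ℝ} (hC : 0 ≤ C) :
    ∃ M, 0 ≤ M ∧ C ≤ ε * M ^ 2 := by
  refine ⟨C / ε + 1, by positivity, ?_⟩
  have h : C = ε * (C / ε) := by field_simp
  nlinarith [div_nonneg hC hε.le]

end Tails

end LowRankGraph

open LowRankGraph

/-- **Lemma 2 (Gao–Lafferty).** In the low-rank latent variable model, with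
`‖g‖∞² = Σ_l ‖g_l‖∞² ≤ s`, uniformly over `n` and admissible `g`:
`|p̂³ − p̃³| = O_P(‖g‖∞⁶/√n + ‖g‖∞⁵/n + ‖g‖∞⁴/n² + ‖g‖∞³/n³)` and
`|q̂ − q̃| = O_P(‖g‖∞⁶/√n + ‖g‖∞⁵/n + ‖g‖∞³/n^{3/2})`.  Here `s = Σ_l B_l²`
for pointwise bounds `B_l` of `g_l` on `[0,1]`, so that `‖g‖∞⁶ = s³`,
`‖g‖∞⁵ = s²√s`, `‖g‖∞⁴ = s²` and `‖g‖∞³ = s√s`. -/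
theorem OP_pq_bounds_latent :
    ∀ ε : ℝ, 0 < ε → ∃ M : ℝ,
      ∀ (n r : ℕ) (g : Fin r → ℝ → ℝ) (B : Fin r → ℝ),
        (∀ l, Measurable (g l)) →
        (∀ l, ∀ x ∈ Set.Icc (0 : ℝ) 1, |g l x| ≤ B l) →
        (∀ x y : Fin r → ℝ, (∀ l, x l ∈ Set.Icc (0 : ℝ) 1) →
          (∀ l, y l ∈ Set.Icc (0 : ℝ) 1) →
          0 ≤ ∑ l : Fin r, g l (x l) * g l (y l) ∧
            ∑ l : Fin r, g l (x l) * g l (y l) ≤ 1) →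
        ((latentMeasure n r g)
            {A | M * ((∑ l, B l ^ 2) ^ 3 / Real.sqrt n
                + (∑ l, B l ^ 2) ^ 2 * Real.sqrt (∑ l, B l ^ 2) / n
                + (∑ l, B l ^ 2) ^ 2 / (n : ℝ) ^ 2
                + (∑ l, B l ^ 2) * Real.sqrt (∑ l, B l ^ 2) / (n : ℝ) ^ 3) <
              |pHat A ^ 3 - pTilde n r g ^ 3|}).toReal ≤ ε ∧
        ((latentMeasure n r g)
            {A | M * ((∑ l, B l ^ 2) ^ 3 / Real.sqrt n
                + (∑ l, B l ^ 2) ^ 2 * Real.sqrt (∑ l, B l ^ 2) / n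
                + (∑ l, B l ^ 2) * Real.sqrt (∑ l, B l ^ 2)
                    / ((n : ℝ) * Real.sqrt n)) <
              |F3hat A - qTilde n r g|}).toReal ≤ ε := by
  intro ε hε
  obtain ⟨M₁, hM₁, hεM₁⟩ := exists_nonneg_le_mul_sq hε (C := 64) (by norm_num)
  obtain ⟨M₂, hM₂, hεM₂⟩ := exists_nonneg_le_mul_sq hε (C := 11664) (by norm_num)
  refine ⟨max (3 * M₁ + 6 * M₁ ^ 2 + 4 * M₁ ^ 3) M₂, fun n r g B hg hB hg01 => ⟨?_, ?_⟩⟩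
  · exact measureReal_lt_abs_pHat_pow_three_sub_le hg hg01 hB hε.le hM₁ hεM₁ (le_max_left _ _)
  · exact measureReal_lt_abs_F3hat_sub_le hg hg01 hB hε.le hM₂ hεM₂ (le_max_right _ _)

end
end
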